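/- arXiv:math/0304367 — 7 statements merged into one kernel-verified Lean document; each statement's English description precedes it below -/
import Mathlib

section
/- For the birth-death generator with birth rates b_i = i+1 and death rates a_i = 2i + 4 + √2, there exists a cubic polynomial g (of degree exactly 3) such that Qg = -3g, so 3 is an eigenvalue of -Q with a cubic eigenfunction. -/
/-- For the birth-death generator with b_i = i+1 and a_i = 2i+4+√2 (a_0 = 0),
there exists a polynomial g of degree exactly 3 with Qg = -3g, so 3 is an
eigenvalue of -Q with a cubic eigenfunction. -/
theorem stmt4 :
    ∃ g : ℝ → ℝ,
      (∃ p : Polynomial ℝ, p.degree = 3 ∧ ∀ x, g x = p.eval x) ∧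
      ∀ i : ℕ,
        (if i = 0 then (0:ℝ) else 2*(i:ℝ)+4+Real.sqrt 2) * (g ((i:ℝ)-1) - g (i:ℝ))
          + ((i:ℝ)+1) * (g ((i:ℝ)+1) - g (i:ℝ))
          = -3 * g (i:ℝ) := by
  set s : ℝ := Real.sqrt 2 with hs
  have hss : s * s = 2 := Real.mul_self_sqrt (by norm_num)
  refine ⟨fun x => x^3 + 3*s*x^2 + (3*s-1)*x - 2*s, ?_, ?_⟩
  · refine ⟨Polynomial.C 1 * Polynomial.X^3 + Polynomial.C (3*s) * Polynomial.X^2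
      + Polynomial.C (3*s-1) * Polynomial.X + Polynomial.C (-(2*s)), ?_, ?_⟩
    · exact Polynomial.degree_cubic one_ne_zero
    · intro x; simp; ring
  · intro i
    rcases i with _ | n
    · simp; ring
    · have h0 : (n:ℕ) + 1 ≠ 0 := Nat.succ_ne_zero n
      simp only [h0, if_neg, Nat.cast_succ]
      push_cast
      linear_combination (-6*((n:ℝ)+1)) * hss
end

section
/- (Lawler–Sokal Cheeger bound for bounded jump processes.) Let (E,ℰ,π) be a probability space and q(x,dy) a symmetric jump kernel (π(dx)q(x,dy) symmetric) with M := sup_x q(x,E) < ∞. Define the Cheeger constant k = inf over measurable A with π(A) ∈ (0,1) of ∫_A π(dx) q(x,A^c) / min(π(A), π(A^c)), and λ_1 = inf{ D(f) : π(f)=0, ‖f‖_2=1 } where D(f) = (1/2)∫∫ π(dx)q(x,dy)(f(y)−f(x))². Then λ_1 ≥ k²/(2M). -/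
open MeasureTheory ProbabilityTheory

/-!
Split `f` at a median `m` into `g = (f - m)⁺` and `h = (f - m)⁻`. Each is supported on a set of
`π`-measure at most `1/2`, so every superlevel set `{p² > t}` of `p ∈ {g, h}` has boundary flow
`Q({p² > t} × {p² ≤ t}) ≥ k π{p² > t}`; integrating over `t` (co-area) gives
`k ∫ p² ≤ ∫∫ J(dx,dy) (p(x)² - p(y)²)⁺ = ½ ∫∫ J |p(x) - p(y)| |p(x) + p(y)|`,
and Cauchy–Schwarz with `∫∫ J (p(x) + p(y))² ≤ 4M ∫ p²` yields `k² ∫ p² ≤ 2M D(p)`.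
Since `D(g) + D(h) ≤ D(f)` and `∫ g² + ∫ h² = ∫ (f - m)² = 1 + m² ≥ 1`, adding the two
inequalities gives `k² ≤ 2M D(f)`.
-/

open Set Filter Topology
open scoped ENNReal

lemma exists_measure_Ioi_le_and_measure_Iio_le (ν : Measure ℝ) [IsProbabilityMeasure ν] :
    ∃ m, ν (Ioi m) ≤ 2⁻¹ ∧ ν (Iio m) ≤ 2⁻¹ := by
  set F := cdf ν
  set s := {x | (2⁻¹ : ℝ) ≤ F x}
  have hne : s.Nonempty :=
    ((tendsto_cdf_atTop ν).eventually (eventually_ge_nhds (by norm_num))).exists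
  have hbdd : BddBelow s := by
    obtain ⟨b, hb⟩ := eventually_atBot.mp
      ((tendsto_cdf_atBot ν).eventually (eventually_lt_nhds (by norm_num : (0 : ℝ) < 2⁻¹)))
    exact ⟨b, fun x hx => le_of_not_gt fun hxb => (hb x hxb.le).not_ge hx⟩
  have hright : 2⁻¹ ≤ F (sInf s) := by
    refine ge_of_tendsto ((F.right_continuous _).mono Ioi_subset_Ici_self) ?_
    filter_upwards [self_mem_nhdsWithin] with t ht
    obtain ⟨x, hx, hxt⟩ := exists_lt_of_csInf_lt hne ht
    exact hx.trans (F.mono hxt.le)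
  have hleft : Function.leftLim F (sInf s) ≤ 2⁻¹ := by
    rw [F.mono.leftLim_eq_sSup]
    refine csSup_le (nonempty_Iio.image F) ?_
    rintro _ ⟨x, hx, rfl⟩
    exact le_of_not_ge fun h => (not_le.mpr hx) (csInf_le hbdd h)
  refine ⟨sInf s, ?_, ?_⟩
  · rw [← measure_cdf ν, F.measure_Ioi (tendsto_cdf_atTop ν), ← ENNReal.ofReal_ofNat 2,
      ← ENNReal.ofReal_inv_of_pos two_pos]
    exact ENNReal.ofReal_le_ofReal (by linarith)
  · rw [← measure_cdf ν, F.measure_Iio (tendsto_cdf_atBot ν), ← ENNReal.ofReal_ofNat 2,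
      ← ENNReal.ofReal_inv_of_pos two_pos]
    exact ENNReal.ofReal_le_ofReal (by linarith)

lemma ENNReal.lintegral_mul_sq_le {α : Type*} [MeasurableSpace α] (μ : Measure α)
    {u v : α → ℝ≥0∞} (hu : AEMeasurable u μ) (hv : AEMeasurable v μ) :
    (∫⁻ a, u a * v a ∂μ) ^ 2 ≤ (∫⁻ a, u a ^ 2 ∂μ) * ∫⁻ a, v a ^ 2 ∂μ := by
  have hsq : ∀ x : ℝ≥0∞, (x ^ (1 / 2 : ℝ)) ^ 2 = x := fun x => by
    rw [← ENNReal.rpow_natCast, ← ENNReal.rpow_mul]; norm_num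
  have key := ENNReal.lintegral_mul_le_Lp_mul_Lq μ Real.HolderConjugate.two_two hu hv
  simp only [Pi.mul_apply, ENNReal.rpow_two] at key
  calc (∫⁻ a, u a * v a ∂μ) ^ 2
      ≤ ((∫⁻ a, u a ^ 2 ∂μ) ^ (1 / 2 : ℝ) * (∫⁻ a, v a ^ 2 ∂μ) ^ (1 / 2 : ℝ)) ^ 2 := by gcongr
    _ = (∫⁻ a, u a ^ 2 ∂μ) * ∫⁻ a, v a ^ 2 ∂μ := by rw [mul_pow, hsq, hsq]

lemma sq_posPart_add_sq_negPart (a : ℝ) : a⁺ ^ 2 + a⁻ ^ 2 = a ^ 2 := by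
  rcases le_total a 0 with ha | ha <;> simp [*]

lemma sq_posPart_sub_add_sq_negPart_sub_le (a b : ℝ) :
    (a⁺ - b⁺) ^ 2 + (a⁻ - b⁻) ^ 2 ≤ (a - b) ^ 2 := by
  rcases le_total a 0 with ha | ha <;> rcases le_total b 0 with hb | hb <;> simp [*] <;> nlinarith

lemma ENNReal.ofReal_sub_add_ofReal_sub (a b : ℝ) :
    ENNReal.ofReal (b - a) + ENNReal.ofReal (a - b) = ENNReal.ofReal |a - b| := by
  rcases le_total a b with h | h
  · rw [ENNReal.ofReal_of_nonpos (sub_nonpos.mpr h), add_zero, abs_sub_comm,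
      abs_of_nonneg (sub_nonneg.mpr h)]
  · rw [ENNReal.ofReal_of_nonpos (sub_nonpos.mpr h), zero_add, abs_of_nonneg (sub_nonneg.mpr h)]

lemma volume_restrict_Ioi_zero_Ico {a : ℝ} (ha : 0 ≤ a) (b : ℝ) :
    volume.restrict (Ioi 0) (Ico a b) = ENNReal.ofReal (b - a) := by
  rw [Measure.restrict_congr_set Ioi_ae_eq_Ici, Measure.restrict_apply measurableSet_Ico,
    inter_eq_left.mpr (Ico_subset_Ici_self.trans (Ici_subset_Ici.mpr ha)), Real.volume_Ico]

section Coarea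

variable {E : Type*} [MeasurableSpace E]

lemma lintegral_ofReal_sub_eq_lintegral_measure_prod (ν : Measure (E × E)) [SFinite ν]
    {φ : E → ℝ} (hφ : Measurable φ) (hφ0 : 0 ≤ φ) :
    ∫⁻ z, ENNReal.ofReal (φ z.1 - φ z.2) ∂ν =
      ∫⁻ t in Ioi 0, ν ({x | t < φ x} ×ˢ {x | t < φ x}ᶜ) := by
  set D : Set (ℝ × (E × E)) := {w | φ w.2.2 ≤ w.1 ∧ w.1 < φ w.2.1}
  have hD : MeasurableSet D :=
    (measurableSet_le (hφ.comp (measurable_snd.comp measurable_snd)) measurable_fst).inter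
      (measurableSet_lt measurable_fst (hφ.comp (measurable_fst.comp measurable_snd)))
  calc ∫⁻ z, ENNReal.ofReal (φ z.1 - φ z.2) ∂ν
      = ∫⁻ z, volume.restrict (Ioi 0) ((fun t => (t, z)) ⁻¹' D) ∂ν := by
        refine lintegral_congr fun z => ?_
        rw [← volume_restrict_Ioi_zero_Ico (hφ0 z.2)]
        rfl
    _ = (volume.restrict (Ioi 0)).prod ν D := (Measure.prod_apply_symm hD).symm
    _ = ∫⁻ t in Ioi 0, ν (Prod.mk t ⁻¹' D) := Measure.prod_apply hD
    _ = ∫⁻ t in Ioi 0, ν ({x | t < φ x} ×ˢ {x | t < φ x}ᶜ) := by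
        refine lintegral_congr fun t => ?_
        congr 1
        ext z
        simp [D, and_comm]

lemma mul_lintegral_le_of_forall_measure_superlevel_le (π : Measure E) (ν : Measure (E × E))
    [SFinite ν] (κ : ℝ≥0∞) {φ : E → ℝ} (hφ : Measurable φ) (hφ0 : 0 ≤ φ)
    (hK : ∀ t > 0, κ * π {x | t < φ x} ≤ ν ({x | t < φ x} ×ˢ {x | t < φ x}ᶜ)) :
    κ * ∫⁻ x, ENNReal.ofReal (φ x) ∂π ≤ ∫⁻ z, ENNReal.ofReal (φ z.1 - φ z.2) ∂ν := by
  rw [lintegral_eq_lintegral_meas_lt π (ae_of_all _ hφ0) hφ.aemeasurable,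
    lintegral_ofReal_sub_eq_lintegral_measure_prod ν hφ hφ0]
  exact (lintegral_const_mul_le _ _).trans (setLIntegral_mono' measurableSet_Ioi hK)

end Coarea

section SecondMoment

variable {E : Type*} [MeasurableSpace E] {π : Measure E} [IsProbabilityMeasure π]

lemma lintegral_ofReal_sq_sub_const {f : E → ℝ} (hf : Measurable f) (hf0 : ∫ x, f x ∂π = 0)
    (hf1 : ∫ x, f x ^ 2 ∂π = 1) (m : ℝ) :
    ∫⁻ x, ENNReal.ofReal ((f x - m) ^ 2) ∂π = ENNReal.ofReal (1 + m ^ 2) := by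
  have hf2 : Integrable (fun x => f x ^ 2) π := Integrable.of_integral_ne_zero (by simp [hf1])
  have hfi : Integrable f π :=
    ((memLp_two_iff_integrable_sq hf.aestronglyMeasurable).mpr hf2).integrable one_le_two
  have hexpand : (fun x => (f x - m) ^ 2) = fun x => f x ^ 2 - 2 * m * f x + m ^ 2 := by
    funext x; ring
  have hint : Integrable (fun x => f x ^ 2 - 2 * m * f x + m ^ 2) π :=
    (hf2.sub (hfi.const_mul _)).add (integrable_const _)
  rw [← ofReal_integral_eq_lintegral_ofReal (hexpand ▸ hint) (ae_of_all _ fun _ => sq_nonneg _),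
    hexpand, integral_add (f := fun x => f x ^ 2 - 2 * m * f x) (hf2.sub (hfi.const_mul _))
      (integrable_const _),
    integral_sub hf2 (hfi.const_mul _), integral_const_mul, hf0, hf1]
  simp

lemma exists_integral_eq_zero_integral_sq_eq_one {A : Set E} (hA : MeasurableSet A)
    (h0 : 0 < π A) (h1 : π A < 1) :
    ∃ f : E → ℝ, Measurable f ∧ ∫ x, f x ∂π = 0 ∧ ∫ x, f x ^ 2 ∂π = 1 := by
  set b := π.real A
  have hb0 : 0 < b := ENNReal.toReal_pos h0.ne' (measure_ne_top _ _)
  have hb1 : b < 1 := by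
    simpa [b, measureReal_def] using ENNReal.toReal_strict_mono ENNReal.one_ne_top h1
  set c := (Real.sqrt (b * (1 - b)))⁻¹
  have hc : c ^ 2 * (b * (1 - b)) = 1 := by
    rw [inv_pow, Real.sq_sqrt (by nlinarith), inv_mul_cancel₀ (by nlinarith)]
  refine ⟨fun x => A.indicator (fun _ => c) x - b * c,
    (measurable_const.indicator hA).sub measurable_const, ?_, ?_⟩
  · rw [integral_sub ((integrable_const c).indicator hA) (integrable_const _),
      integral_indicator_const _ hA]
    simp [b]
  · have hsq : (fun x => (A.indicator (fun _ => c) x - b * c) ^ 2) =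
        fun x => A.indicator (fun _ => c ^ 2 * (1 - 2 * b)) x + b ^ 2 * c ^ 2 := by
      funext x
      by_cases hx : x ∈ A <;> simp [hx] <;> ring
    rw [hsq, integral_add ((integrable_const _).indicator hA) (integrable_const _),
      integral_indicator_const _ hA]
    simp only [integral_const, smul_eq_mul, probReal_univ, one_mul]
    linear_combination hc

end SecondMoment

namespace JumpProcess

variable {E : Type*} [MeasurableSpace E] {π : Measure E} {q : Kernel E E}

/-- `jumpEnergy π q f = 2 D(f)`. -/
noncomputable def jumpEnergy (π : Measure E) (q : Kernel E E) (f : E → ℝ) : ℝ≥0∞ :=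
  ∫⁻ z, ENNReal.ofReal ((f z.2 - f z.1) ^ 2) ∂(π ⊗ₘ q)

lemma compProd_map_swap [IsFiniteMeasure π] [IsFiniteKernel q]
    (hsymm : ∀ A B : Set E, MeasurableSet A → MeasurableSet B →
      ∫⁻ x in A, q x B ∂π = ∫⁻ x in B, q x A ∂π) :
    (π ⊗ₘ q).map Prod.swap = π ⊗ₘ q := by
  refine ext_of_generate_finite _ generateFrom_prod.symm isPiSystem_prod ?_ ?_
  · rintro _ ⟨A, hA, B, hB, rfl⟩
    rw [Measure.map_apply measurable_swap (hA.prod hB), preimage_swap_prod,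
      Measure.compProd_apply_prod hB hA, Measure.compProd_apply_prod hA hB, hsymm B A hB hA]
  · rw [Measure.map_apply measurable_swap MeasurableSet.univ, preimage_univ]

lemma lintegral_comp_swap (hswap : (π ⊗ₘ q).map Prod.swap = π ⊗ₘ q)
    {F : E × E → ℝ≥0∞} (hF : Measurable F) :
    ∫⁻ z, F z.swap ∂(π ⊗ₘ q) = ∫⁻ z, F z ∂(π ⊗ₘ q) := by
  conv_rhs => rw [← hswap]
  rw [lintegral_map hF measurable_swap]

lemma two_mul_lintegral_ofReal_sub (hswap : (π ⊗ₘ q).map Prod.swap = π ⊗ₘ q)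
    {φ : E → ℝ} (hφ : Measurable φ) :
    2 * ∫⁻ z, ENNReal.ofReal (φ z.1 - φ z.2) ∂(π ⊗ₘ q) =
      ∫⁻ z, ENNReal.ofReal |φ z.1 - φ z.2| ∂(π ⊗ₘ q) := by
  have hW : Measurable fun z : E × E => ENNReal.ofReal (φ z.1 - φ z.2) :=
    ENNReal.measurable_ofReal.comp ((hφ.comp measurable_fst).sub (hφ.comp measurable_snd))
  have hsw : ∫⁻ z, ENNReal.ofReal (φ z.2 - φ z.1) ∂(π ⊗ₘ q) =
      ∫⁻ z, ENNReal.ofReal (φ z.1 - φ z.2) ∂(π ⊗ₘ q) := lintegral_comp_swap hswap hW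
  rw [two_mul]
  nth_rewrite 1 [← hsw]
  rw [← lintegral_add_left (f := fun z : E × E => ENNReal.ofReal (φ z.2 - φ z.1))
    (hW.comp measurable_swap)]
  exact lintegral_congr fun z => ENNReal.ofReal_sub_add_ofReal_sub _ _

lemma jumpEnergy_posPart_add_jumpEnergy_negPart_le {f : E → ℝ} (hf : Measurable f) (m : ℝ) :
    jumpEnergy π q (fun x => (f x - m)⁺) + jumpEnergy π q (fun x => (f x - m)⁻) ≤
      jumpEnergy π q f := by
  have hg : Measurable fun z : E × E =>
      ENNReal.ofReal (((f z.2 - m)⁺ - (f z.1 - m)⁺) ^ 2) := by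
    fun_prop
  rw [jumpEnergy, jumpEnergy, ← lintegral_add_left hg]
  refine lintegral_mono fun z => ?_
  rw [← ENNReal.ofReal_add (sq_nonneg _) (sq_nonneg _)]
  refine ENNReal.ofReal_le_ofReal ?_
  simpa using sq_posPart_sub_add_sq_negPart_sub_le (f z.2 - m) (f z.1 - m)

lemma sq_lintegral_ofReal_abs_sq_sub_sq_le {p : E → ℝ} (hp : Measurable p) :
    (∫⁻ z, ENNReal.ofReal |p z.1 ^ 2 - p z.2 ^ 2| ∂(π ⊗ₘ q)) ^ 2 ≤
      jumpEnergy π q p * ∫⁻ z, ENNReal.ofReal ((p z.1 + p z.2) ^ 2) ∂(π ⊗ₘ q) := by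
  have hu : Measurable fun z : E × E => ENNReal.ofReal |p z.2 - p z.1| :=
    ENNReal.measurable_ofReal.comp ((hp.comp measurable_snd).sub (hp.comp measurable_fst)).abs
  have hv : Measurable fun z : E × E => ENNReal.ofReal |p z.1 + p z.2| :=
    ENNReal.measurable_ofReal.comp ((hp.comp measurable_fst).add (hp.comp measurable_snd)).abs
  have hfactor : ∀ z : E × E, ENNReal.ofReal |p z.1 ^ 2 - p z.2 ^ 2| =
      ENNReal.ofReal |p z.2 - p z.1| * ENNReal.ofReal |p z.1 + p z.2| := fun z => by
    rw [← ENNReal.ofReal_mul (abs_nonneg _), ← abs_mul, ← abs_neg]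
    ring_nf
  have hsq_abs : ∀ a : ℝ, ENNReal.ofReal |a| ^ 2 = ENNReal.ofReal (a ^ 2) := fun a => by
    rw [← ENNReal.ofReal_pow (abs_nonneg _), sq_abs]
  calc (∫⁻ z, ENNReal.ofReal |p z.1 ^ 2 - p z.2 ^ 2| ∂(π ⊗ₘ q)) ^ 2
      = (∫⁻ z, ENNReal.ofReal |p z.2 - p z.1| * ENNReal.ofReal |p z.1 + p z.2| ∂(π ⊗ₘ q)) ^ 2 := by
        simp_rw [hfactor]
    _ ≤ _ := ENNReal.lintegral_mul_sq_le (π ⊗ₘ q) hu.aemeasurable hv.aemeasurable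
    _ = _ := by simp_rw [hsq_abs, jumpEnergy]

section SFinite

variable [SFinite π] [IsSFiniteKernel q]

lemma lintegral_fst_le {M : ℝ≥0∞} (hbound : ∀ x, q x univ ≤ M)
    {F : E → ℝ≥0∞} (hF : Measurable F) :
    ∫⁻ z, F z.1 ∂(π ⊗ₘ q) ≤ M * ∫⁻ x, F x ∂π := by
  rw [Measure.lintegral_compProd (f := fun z : E × E => F z.1) (hF.comp measurable_fst),
    ← lintegral_const_mul M hF]
  refine lintegral_mono fun x => ?_
  dsimp only
  rw [lintegral_const, mul_comm]
  exact mul_le_mul' (hbound x) le_rfl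

lemma lintegral_ofReal_sq_le (hswap : (π ⊗ₘ q).map Prod.swap = π ⊗ₘ q)
    {M : ℝ≥0∞} (hbound : ∀ x, q x univ ≤ M) {u : E → ℝ} (hu : Measurable u)
    {G : E × E → ℝ} (hG : ∀ z, |G z| ≤ |u z.1| + |u z.2|) :
    ∫⁻ z, ENNReal.ofReal (G z ^ 2) ∂(π ⊗ₘ q) ≤ 4 * M * ∫⁻ x, ENNReal.ofReal (u x ^ 2) ∂π := by
  set F : E → ℝ≥0∞ := fun x => ENNReal.ofReal (u x ^ 2)
  have hF : Measurable F := ENNReal.measurable_ofReal.comp (hu.pow_const 2)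
  have hsnd : ∫⁻ z, F z.2 ∂(π ⊗ₘ q) = ∫⁻ z, F z.1 ∂(π ⊗ₘ q) :=
    lintegral_comp_swap hswap (hF.comp measurable_fst)
  have hpoint : ∀ z : E × E, ENNReal.ofReal (G z ^ 2) ≤ 2 * F z.1 + 2 * F z.2 := by
    intro z
    rw [← ENNReal.ofReal_ofNat 2, ← ENNReal.ofReal_mul two_pos.le,
      ← ENNReal.ofReal_mul two_pos.le, ← ENNReal.ofReal_add (by positivity) (by positivity)]
    refine ENNReal.ofReal_le_ofReal ?_
    have h := hG z
    nlinarith [sq_abs (G z), sq_abs (u z.1), sq_abs (u z.2), abs_nonneg (G z),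
      sq_nonneg (|u z.1| - |u z.2|)]
  calc ∫⁻ z, ENNReal.ofReal (G z ^ 2) ∂(π ⊗ₘ q)
      ≤ ∫⁻ z, (2 * F z.1 + 2 * F z.2) ∂(π ⊗ₘ q) := lintegral_mono hpoint
    _ = 2 * ∫⁻ z, F z.1 ∂(π ⊗ₘ q) + 2 * ∫⁻ z, F z.1 ∂(π ⊗ₘ q) := by
        rw [lintegral_add_left (f := fun z : E × E => 2 * F z.1)
            ((hF.comp measurable_fst).const_mul 2),
          lintegral_const_mul (f := fun z : E × E => F z.1) _ (hF.comp measurable_fst),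
          lintegral_const_mul (f := fun z : E × E => F z.2) _ (hF.comp measurable_snd), hsnd]
    _ ≤ 2 * (M * ∫⁻ x, F x ∂π) + 2 * (M * ∫⁻ x, F x ∂π) := by
        gcongr <;> exact lintegral_fst_le hbound hF
    _ = 4 * M * ∫⁻ x, F x ∂π := by ring

lemma jumpEnergy_le (hswap : (π ⊗ₘ q).map Prod.swap = π ⊗ₘ q) {M : ℝ≥0∞}
    (hbound : ∀ x, q x univ ≤ M) {f : E → ℝ} (hf : Measurable f) :
    jumpEnergy π q f ≤ 4 * M * ∫⁻ x, ENNReal.ofReal (f x ^ 2) ∂π :=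
  lintegral_ofReal_sq_le hswap hbound hf fun _ => (abs_sub _ _).trans_eq (add_comm _ _)

lemma integral_integral_sq_sub_eq_toReal_jumpEnergy {f : E → ℝ} (hf : Measurable f)
    (hfin : jumpEnergy π q f ≠ ∞) :
    ∫ x, ∫ y, (f y - f x) ^ 2 ∂(q x) ∂π = (jumpEnergy π q f).toReal := by
  have hmeas : Measurable fun z : E × E => (f z.2 - f z.1) ^ 2 :=
    ((hf.comp measurable_snd).sub (hf.comp measurable_fst)).pow_const 2
  have hint : Integrable (fun z : E × E => (f z.2 - f z.1) ^ 2) (π ⊗ₘ q) :=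
    (lintegral_ofReal_ne_top_iff_integrable hmeas.aestronglyMeasurable
      (ae_of_all _ fun _ => sq_nonneg _)).mp hfin
  rw [← Measure.integral_compProd hint,
    integral_eq_lintegral_of_nonneg_ae (ae_of_all _ fun _ => sq_nonneg _)
      hmeas.aestronglyMeasurable]
  rfl

lemma sq_mul_lintegral_sq_le_mul_jumpEnergy (hswap : (π ⊗ₘ q).map Prod.swap = π ⊗ₘ q)
    {M κ : ℝ≥0∞} (hbound : ∀ x, q x univ ≤ M)
    (hK : ∀ A, MeasurableSet A → π A ≤ 2⁻¹ → κ * π A ≤ (π ⊗ₘ q) (A ×ˢ Aᶜ))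
    {p : E → ℝ} (hp : Measurable p) (hsupp : π {x | p x ≠ 0} ≤ 2⁻¹)
    (hfin : ∫⁻ x, ENNReal.ofReal (p x ^ 2) ∂π ≠ ∞) :
    κ ^ 2 * ∫⁻ x, ENNReal.ofReal (p x ^ 2) ∂π ≤ M * jumpEnergy π q p := by
  set P := ∫⁻ x, ENNReal.ofReal (p x ^ 2) ∂π
  have hp2 : Measurable fun x => p x ^ 2 := hp.pow_const 2
  have hcoarea : κ * P ≤ ∫⁻ z, ENNReal.ofReal (p z.1 ^ 2 - p z.2 ^ 2) ∂(π ⊗ₘ q) := by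
    refine mul_lintegral_le_of_forall_measure_superlevel_le π _ κ hp2 (fun x => sq_nonneg _)
      fun t ht => hK _ (measurableSet_lt measurable_const hp2) ((measure_mono ?_).trans hsupp)
    intro x hx h0
    simp [h0] at hx
    linarith [ht]
  have hCS := sq_lintegral_ofReal_abs_sq_sub_sq_le (π := π) (q := q) hp
  have hsum : ∫⁻ z, ENNReal.ofReal ((p z.1 + p z.2) ^ 2) ∂(π ⊗ₘ q) ≤ 4 * M * P :=
    lintegral_ofReal_sq_le hswap hbound hp fun _ => abs_add_le _ _
  have hsq : (4 * P) * (κ ^ 2 * P) ≤ (4 * P) * (M * jumpEnergy π q p) := calc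
    (4 * P) * (κ ^ 2 * P) = (2 * (κ * P)) ^ 2 := by ring
    _ ≤ (∫⁻ z, ENNReal.ofReal |p z.1 ^ 2 - p z.2 ^ 2| ∂(π ⊗ₘ q)) ^ 2 := by
        rw [← two_mul_lintegral_ofReal_sub hswap hp2]
        gcongr
    _ ≤ jumpEnergy π q p * (4 * M * P) := hCS.trans (by gcongr)
    _ = (4 * P) * (M * jumpEnergy π q p) := by ring
  rcases eq_or_ne P 0 with h0 | h0
  · simp [h0]
  · exact (ENNReal.mul_le_mul_iff_right (by simp [h0]) (ENNReal.mul_ne_top (by simp) hfin)).mp hsq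

end SFinite

lemma sq_le_mul_jumpEnergy [IsProbabilityMeasure π] [IsSFiniteKernel q]
    (hswap : (π ⊗ₘ q).map Prod.swap = π ⊗ₘ q)
    {M κ : ℝ≥0∞} (hbound : ∀ x, q x univ ≤ M)
    (hK : ∀ A, MeasurableSet A → π A ≤ 2⁻¹ → κ * π A ≤ (π ⊗ₘ q) (A ×ˢ Aᶜ))
    {f : E → ℝ} (hf : Measurable f) (hf0 : ∫ x, f x ∂π = 0) (hf1 : ∫ x, f x ^ 2 ∂π = 1) :
    κ ^ 2 ≤ M * jumpEnergy π q f := by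
  have := Measure.isProbabilityMeasure_map (μ := π) hf.aemeasurable
  obtain ⟨m, hm_gt, hm_lt⟩ := exists_measure_Ioi_le_and_measure_Iio_le (π.map f)
  rw [Measure.map_apply hf measurableSet_Ioi] at hm_gt
  rw [Measure.map_apply hf measurableSet_Iio] at hm_lt
  set g := fun x => (f x - m)⁺
  set h := fun x => (f x - m)⁻
  have hg : Measurable g := (hf.sub_const m).max measurable_const
  have hh : Measurable h := (hf.sub_const m).neg.max measurable_const
  have hsupp_g : π {x | g x ≠ 0} ≤ 2⁻¹ := by
    convert hm_gt using 2
    ext x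
    simp [g]
  have hsupp_h : π {x | h x ≠ 0} ≤ 2⁻¹ := by
    convert hm_lt using 2
    ext x
    simp [h]
  have hsplit : ∫⁻ x, ENNReal.ofReal (g x ^ 2) ∂π + ∫⁻ x, ENNReal.ofReal (h x ^ 2) ∂π =
      ENNReal.ofReal (1 + m ^ 2) := by
    rw [← lintegral_ofReal_sq_sub_const hf hf0 hf1 m,
      ← lintegral_add_left (f := fun x => ENNReal.ofReal (g x ^ 2))
        (ENNReal.measurable_ofReal.comp (hg.pow_const 2))]
    refine lintegral_congr fun x => ?_
    rw [← ENNReal.ofReal_add (sq_nonneg _) (sq_nonneg _), sq_posPart_add_sq_negPart]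
  have hone : 1 ≤ ∫⁻ x, ENNReal.ofReal (g x ^ 2) ∂π + ∫⁻ x, ENNReal.ofReal (h x ^ 2) ∂π := by
    rw [hsplit]
    exact ENNReal.one_le_ofReal.mpr (by nlinarith [sq_nonneg m])
  have hfin := hsplit ▸ ENNReal.ofReal_ne_top
  calc κ ^ 2
      ≤ κ ^ 2 * ∫⁻ x, ENNReal.ofReal (g x ^ 2) ∂π + κ ^ 2 * ∫⁻ x, ENNReal.ofReal (h x ^ 2) ∂π := by
        rw [← mul_add]
        exact le_mul_of_one_le_right' hone
    _ ≤ M * jumpEnergy π q g + M * jumpEnergy π q h :=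
        add_le_add
          (sq_mul_lintegral_sq_le_mul_jumpEnergy hswap hbound hK hg hsupp_g
            (ENNReal.add_ne_top.mp hfin).1)
          (sq_mul_lintegral_sq_le_mul_jumpEnergy hswap hbound hK hh hsupp_h
            (ENNReal.add_ne_top.mp hfin).2)
    _ ≤ M * jumpEnergy π q f := by
        rw [← mul_add]
        gcongr
        exact jumpEnergy_posPart_add_jumpEnergy_negPart_le hf m

noncomputable def cheegerRatios (π : Measure E) (q : Kernel E E) : Set ℝ :=
  {r : ℝ | ∃ A : Set E, MeasurableSet A ∧ 0 < π A ∧ π A < 1 ∧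
      r = (∫ x in A, (q x Aᶜ).toReal ∂π) / min (π A).toReal (π Aᶜ).toReal}

noncomputable def cheegerConstant (π : Measure E) (q : Kernel E E) : ℝ :=
  sInf (cheegerRatios π q)

noncomputable def spectralGap (π : Measure E) (q : Kernel E E) : ℝ :=
  sInf {r : ℝ | ∃ f : E → ℝ, Measurable f ∧
      (∫ x, f x ∂π) = 0 ∧ (∫ x, (f x)^2 ∂π) = 1 ∧
      r = (1/2) * ∫ x, (∫ y, (f y - f x)^2 ∂(q x)) ∂π}

lemma nonneg_of_mem_cheegerRatios {r : ℝ} (hr : r ∈ cheegerRatios π q) : 0 ≤ r := by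
  obtain ⟨A, -, -, -, rfl⟩ := hr
  exact div_nonneg (integral_nonneg fun _ => ENNReal.toReal_nonneg)
    (le_min ENNReal.toReal_nonneg ENNReal.toReal_nonneg)

lemma cheegerConstant_nonneg : 0 ≤ cheegerConstant π q :=
  Real.sInf_nonneg fun _ => nonneg_of_mem_cheegerRatios

lemma spectralGap_nonneg : 0 ≤ spectralGap π q := by
  refine Real.sInf_nonneg ?_
  rintro _ ⟨f, -, -, -, rfl⟩
  exact mul_nonneg (by norm_num) (integral_nonneg fun _ => integral_nonneg fun _ => sq_nonneg _)

variable [IsProbabilityMeasure π] [IsFiniteKernel q]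

lemma ofReal_cheegerConstant_mul_le {A : Set E} (hA : MeasurableSet A)
    (hA2 : π A ≤ 2⁻¹) : ENNReal.ofReal (cheegerConstant π q) * π A ≤ (π ⊗ₘ q) (A ×ˢ Aᶜ) := by
  rcases eq_or_ne (π A) 0 with h0 | h0
  · simp [h0]
  have hA1 : π A < 1 := hA2.trans_lt (by norm_num)
  have hmin : min (π A).toReal (π Aᶜ).toReal = π.real A := by
    have : π.real A ≤ 2⁻¹ := by
      simpa [measureReal_def] using ENNReal.toReal_mono (by simp) hA2
    rw [← measureReal_def, ← measureReal_def, probReal_compl_eq_one_sub hA]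
    exact min_eq_left (by linarith)
  have hflow : ∫ x in A, (q x Aᶜ).toReal ∂π = ((π ⊗ₘ q) (A ×ˢ Aᶜ)).toReal := by
    rw [Measure.compProd_apply_prod hA hA.compl, integral_toReal
      (q.measurable_coe hA.compl).aemeasurable (ae_of_all _ fun _ => measure_lt_top _ _)]
  have hk : cheegerConstant π q ≤ ((π ⊗ₘ q) (A ×ˢ Aᶜ)).toReal / π.real A :=
    csInf_le ⟨0, fun _ => nonneg_of_mem_cheegerRatios⟩
      ⟨A, hA, pos_iff_ne_zero.mpr h0, hA1, by rw [hflow, hmin]⟩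
  have hpos : 0 < π.real A := ENNReal.toReal_pos h0 (measure_ne_top _ _)
  rw [le_div_iff₀ hpos] at hk
  calc ENNReal.ofReal (cheegerConstant π q) * π A
      = ENNReal.ofReal (cheegerConstant π q * π.real A) := by
        rw [ENNReal.ofReal_mul cheegerConstant_nonneg, ofReal_measureReal]
    _ ≤ (π ⊗ₘ q) (A ×ˢ Aᶜ) := ENNReal.ofReal_le_of_le_toReal hk

lemma sq_cheegerConstant_div_le (hswap : (π ⊗ₘ q).map Prod.swap = π ⊗ₘ q)
    {M : ℝ} (hM : 0 < M) (hbound : ∀ x, q x univ ≤ ENNReal.ofReal M)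
    {f : E → ℝ} (hf : Measurable f) (hf0 : ∫ x, f x ∂π = 0) (hf1 : ∫ x, f x ^ 2 ∂π = 1) :
    cheegerConstant π q ^ 2 / (2 * M) ≤ 1 / 2 * ∫ x, ∫ y, (f y - f x) ^ 2 ∂(q x) ∂π := by
  have hL2 : ∫⁻ x, ENNReal.ofReal (f x ^ 2) ∂π = 1 := by
    simpa using lintegral_ofReal_sq_sub_const hf hf0 hf1 0
  have hfin : jumpEnergy π q f ≠ ∞ :=
    ((jumpEnergy_le hswap hbound hf).trans_lt (by
      rw [hL2, mul_one]; exact ENNReal.mul_lt_top (by simp) ENNReal.ofReal_lt_top)).ne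
  have hkey := sq_le_mul_jumpEnergy hswap hbound
    (fun A hA => ofReal_cheegerConstant_mul_le hA) hf hf0 hf1
  have hreal : cheegerConstant π q ^ 2 ≤ M * (jumpEnergy π q f).toReal := by
    simpa [ENNReal.toReal_pow, ENNReal.toReal_ofReal cheegerConstant_nonneg,
      ENNReal.toReal_ofReal hM.le] using
      ENNReal.toReal_mono (ENNReal.mul_ne_top ENNReal.ofReal_ne_top hfin) hkey
  rw [integral_integral_sq_sub_eq_toReal_jumpEnergy hf hfin, div_le_iff₀ (by positivity)]
  linarith

theorem sq_cheegerConstant_div_le_spectralGap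
    (hsymm : ∀ A B : Set E, MeasurableSet A → MeasurableSet B →
      ∫⁻ x in A, q x B ∂π = ∫⁻ x in B, q x A ∂π)
    {M : ℝ} (hM : 0 < M) (hbound : ∀ x, q x univ ≤ ENNReal.ofReal M) :
    cheegerConstant π q ^ 2 / (2 * M) ≤ spectralGap π q := by
  rcases (cheegerRatios π q).eq_empty_or_nonempty with hT | ⟨_, A, hA, h0, h1, -⟩
  · -- no set splits `π`, and then `cheegerConstant π q = sInf ∅ = 0`
    simpa [cheegerConstant, hT] using spectralGap_nonneg
  obtain ⟨f, hf, hf0, hf1⟩ := exists_integral_eq_zero_integral_sq_eq_one hA h0 h1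
  refine le_csInf ⟨_, f, hf, hf0, hf1, rfl⟩ ?_
  rintro _ ⟨f, hf, hf0, hf1, rfl⟩
  exact sq_cheegerConstant_div_le (compProd_map_swap hsymm) hM hbound hf hf0 hf1

end JumpProcess

/-- Lawler–Sokal Cheeger bound for bounded jump processes: λ₁ ≥ k²/(2M). -/
theorem stmt7 {E : Type*} [MeasurableSpace E] (π : Measure E) [IsProbabilityMeasure π]
    (q : Kernel E E) (M : ℝ) (hM : 0 < M)
    (hbound : ∀ x, q x Set.univ ≤ ENNReal.ofReal M)
    (hsymm : ∀ A B : Set E, MeasurableSet A → MeasurableSet B →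
      ∫⁻ x in A, q x B ∂π = ∫⁻ x in B, q x A ∂π)
    (k lam1 : ℝ)
    (hk : k = sInf {r : ℝ | ∃ A : Set E, MeasurableSet A ∧ 0 < π A ∧ π A < 1 ∧
      r = (∫ x in A, (q x Aᶜ).toReal ∂π) / min (π A).toReal (π Aᶜ).toReal})
    (hlam : lam1 = sInf {r : ℝ | ∃ f : E → ℝ, Measurable f ∧
      (∫ x, f x ∂π) = 0 ∧ (∫ x, (f x)^2 ∂π) = 1 ∧
      r = (1/2) * ∫ x, (∫ y, (f y - f x)^2 ∂(q x)) ∂π}) :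
    k^2 / (2*M) ≤ lam1 := by
  have : IsFiniteKernel q := ⟨⟨ENNReal.ofReal M, ENNReal.ofReal_lt_top, hbound⟩⟩
  subst hk hlam
  exact JumpProcess.sq_cheegerConstant_div_le_spectralGap hsymm hM hbound
end

section
/- (Nash inequality ⟹ algebraic decay.) Let (P_t) be a symmetric Markov semigroup with invariant probability measure π, Dirichlet form D, and suppose the Nash inequality Var(f) ≤ C D(f)^{1/p} ‖f‖_1^{2/q} holds for all f ∈ 𝒟(D), where p ∈ (1,∞) and 1/p + 1/q = 1. Then there is a constant C' (depending only on C, p) such that Var(P_t f) ≤ C' ‖f‖_1² t^{1-q} for all t > 0 and f ∈ L¹ ∩ L²(π). -/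
/-!
Write `u t = Var (P t f)` and `N = ‖f‖₁`. Since `P t` contracts `L¹`, the Nash inequality along the
trajectory reads `u ≤ K D^{1/p}` with `K = C N^{2/q}`, i.e. `u' = -2D ≤ -2 K^{-p} u^p`. Hence
`u^{1-p}` grows at least like `2 (p - 1) K^{-p} t`, and raising this to the power `1 - q = (1 - p)⁻¹`
gives `u t ≤ (2 (p - 1))^{1-q} C^q N^2 t^{1-q}`.
-/

open MeasureTheory Set

section

open Real

theorem monotoneOn_rpow_one_sub_sub_mul_of_hasDerivAt {u u' : ℝ → ℝ} {p c a b : ℝ} (hp : 1 < p)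
    (hu : ∀ s ∈ Icc a b, HasDerivAt u (u' s) s) (hpos : ∀ s ∈ Icc a b, 0 < u s)
    (hle : ∀ s ∈ Icc a b, c * u s ^ p ≤ -u' s) :
    MonotoneOn (fun s => u s ^ (1 - p) - (p - 1) * c * s) (Icc a b) := by
  have hderiv : ∀ s ∈ Icc a b, HasDerivAt (fun s => u s ^ (1 - p) - (p - 1) * c * s)
      ((1 - p) * u s ^ (1 - p - 1) * u' s - (p - 1) * c) s := fun s hs =>
    (((hu s hs).rpow_const (Or.inl (hpos s hs).ne')).sub
      ((hasDerivAt_id' s).const_mul ((p - 1) * c))).congr_deriv (by ring)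
  refine monotoneOn_of_hasDerivWithinAt_nonneg (convex_Icc a b)
    (fun s hs => (hderiv s hs).continuousAt.continuousWithinAt)
    (fun s hs => (hderiv s (interior_subset hs)).hasDerivWithinAt) fun s hs => ?_
  have hs := interior_subset hs
  have hus := hpos s hs
  have hc : c ≤ u s ^ (-p) * -u' s :=
    calc c = u s ^ (-p) * (c * u s ^ p) := by
          rw [mul_left_comm, ← rpow_add hus, neg_add_cancel, rpow_zero, mul_one]
      _ ≤ u s ^ (-p) * -u' s := by gcongr; exact hle s hs
  have hexp : 1 - p - 1 = -p := by ring
  rw [hexp]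
  nlinarith

theorem le_rpow_one_sub_of_hasDerivAt {u u' : ℝ → ℝ} {p q c t : ℝ} (hpq : p.HolderConjugate q)
    (hc : 0 < c) (ht : 0 < t) (hu : ∀ s ∈ Icc 0 t, HasDerivAt u (u' s) s)
    (hpos : ∀ s ∈ Icc 0 t, 0 < u s) (hle : ∀ s ∈ Icc 0 t, c * u s ^ p ≤ -u' s) :
    u t ≤ ((p - 1) * c * t) ^ (1 - q) := by
  have h0 : 0 ∈ Icc 0 t := left_mem_Icc.2 ht.le
  have ht' : t ∈ Icc 0 t := right_mem_Icc.2 ht.le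
  have hmono := monotoneOn_rpow_one_sub_sub_mul_of_hasDerivAt hpq.lt hu hpos hle h0 ht' ht.le
  have hu0 : 0 < u 0 ^ (1 - p) := rpow_pos_of_pos (hpos 0 h0) _
  have hgrowth : (p - 1) * c * t ≤ u t ^ (1 - p) := by
    simp only [mul_zero, sub_zero] at hmono
    linarith
  have hinv : (1 - p) * (1 - q) = 1 := by linear_combination hpq.mul_eq_add
  have hrate : 0 < (p - 1) * c * t := by have := hpq.sub_one_pos; positivity
  calc u t = (u t ^ (1 - p)) ^ (1 - q) := by rw [← rpow_mul (hpos t ht').le, hinv, rpow_one]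
    _ ≤ ((p - 1) * c * t) ^ (1 - q) :=
        rpow_le_rpow_of_nonpos hrate hgrowth (by linarith [hpq.symm.lt])

theorem rpow_neg_mul_rpow_le_of_le_mul_rpow_one_div {v D K p : ℝ} (hv : 0 ≤ v) (hD : 0 ≤ D)
    (hK : 0 < K) (hp : 0 < p) (h : v ≤ K * D ^ (1 / p)) : K ^ (-p) * v ^ p ≤ D :=
  calc K ^ (-p) * v ^ p ≤ K ^ (-p) * (K * D ^ (1 / p)) ^ p := by gcongr
    _ = D := by
      rw [mul_rpow hK.le (rpow_nonneg hD _), ← rpow_mul hD, one_div_mul_cancel hp.ne', rpow_one,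
        ← mul_assoc, ← rpow_add hK, neg_add_cancel, rpow_zero, one_mul]

theorem nash_decay_rate_eq {p q C N t : ℝ} (hpq : p.HolderConjugate q) (hC : 0 < C)
    (hN : 0 < N) (ht : 0 < t) :
    ((p - 1) * (2 * (C * N ^ (2 / q)) ^ (-p)) * t) ^ (1 - q) =
      (2 * (p - 1)) ^ (1 - q) * C ^ q * N ^ 2 * t ^ (1 - q) := by
  have hp := hpq.sub_one_pos
  have hexp : -p * (1 - q) = q := by linear_combination hpq.mul_eq_add
  have hK : (C * N ^ (2 / q)) ^ q = C ^ q * N ^ 2 := by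
    rw [mul_rpow hC.le (by positivity), ← rpow_mul hN.le, div_mul_cancel₀ _ hpq.symm.ne_zero,
      rpow_two]
  rw [show (p - 1) * (2 * (C * N ^ (2 / q)) ^ (-p)) * t =
      2 * (p - 1) * (C * N ^ (2 / q)) ^ (-p) * t by ring,
    mul_rpow (by positivity) ht.le, mul_rpow (by positivity) (by positivity),
    ← rpow_mul (by positivity), hexp, hK, mul_assoc _ (C ^ q)]

theorem nash_decay_of_hasDerivAt {u D n : ℝ → ℝ} {p q C N t : ℝ} (hpq : p.HolderConjugate q)
    (hC : 0 < C) (hu : ∀ s, HasDerivAt u (-2 * D s) s) (hD : ∀ s, 0 ≤ D s)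
    (hn0 : ∀ s, 0 ≤ n s) (hn : ∀ s ≥ 0, n s ≤ N)
    (hNash : ∀ s, u s ≤ C * D s ^ (1 / p) * n s ^ (2 / q)) (ht : 0 < t) :
    u t ≤ (2 * (p - 1)) ^ (1 - q) * C ^ q * N ^ 2 * t ^ (1 - q) := by
  have hp := hpq.sub_one_pos
  have hq := hpq.symm.pos
  by_cases hut : u t ≤ 0
  · exact hut.trans (by positivity)
  push Not at hut
  have hanti : Antitone u := antitone_of_hasDerivAt_nonpos hu fun s => by
    simp only [Pi.zero_apply]; linarith [hD s]
  have hpos : ∀ s ∈ Icc 0 t, 0 < u s := fun s hs => hut.trans_le (hanti hs.2)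
  have hN : 0 < N := by
    by_contra! hN
    have hnt : n t = 0 := le_antisymm ((hn t ht.le).trans hN) (hn0 t)
    have := hNash t
    rw [hnt, zero_rpow (by positivity), mul_zero] at this
    linarith
  have hK : 0 < C * N ^ (2 / q) := by positivity
  have hle : ∀ s ∈ Icc 0 t, 2 * (C * N ^ (2 / q)) ^ (-p) * u s ^ p ≤ -(-2 * D s) := by
    intro s hs
    have hnash : u s ≤ C * N ^ (2 / q) * D s ^ (1 / p) :=
      calc u s ≤ C * D s ^ (1 / p) * n s ^ (2 / q) := hNash s
        _ ≤ C * D s ^ (1 / p) * N ^ (2 / q) := by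
          have := rpow_nonneg (hD s) (1 / p)
          gcongr
          exacts [hn0 s, hn s hs.1]
        _ = C * N ^ (2 / q) * D s ^ (1 / p) := by ring
    have := rpow_neg_mul_rpow_le_of_le_mul_rpow_one_div (hpos s hs).le (hD s) hK hpq.pos hnash
    linarith
  calc u t ≤ ((p - 1) * (2 * (C * N ^ (2 / q)) ^ (-p)) * t) ^ (1 - q) :=
        le_rpow_one_sub_of_hasDerivAt hpq (by positivity) ht (fun s _ => hu s) hpos hle
    _ = (2 * (p - 1)) ^ (1 - q) * C ^ q * N ^ 2 * t ^ (1 - q) :=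
        nash_decay_rate_eq hpq hC hN ht

end

theorem stmt9_general {E : Type*} [MeasurableSpace E] (π : Measure E) [IsProbabilityMeasure π]
    (P : ℝ → (E → ℝ) → (E → ℝ)) (Dform : (E → ℝ) → ℝ)
    (Var : (E → ℝ) → ℝ)
    (p q C : ℝ) (hp : 1 < p) (hpq : 1/p + 1/q = 1) (hC : 0 < C)
    (hDnn : ∀ f, 0 ≤ Dform f)
    (hcontr : ∀ f, ∀ t ≥ (0:ℝ), (∫ x, |P t f x| ∂π) ≤ ∫ x, |f x| ∂π)
    (hderiv : ∀ f t, HasDerivAt (fun s => Var (P s f)) (-2 * Dform (P t f)) t)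
    (hNash : ∀ f, Var f ≤ C * (Dform f) ^ (1/p) * (∫ x, |f x| ∂π) ^ (2/q)) :
    ∃ C' : ℝ, 0 < C' ∧ ∀ f, ∀ t > (0:ℝ),
      Var (P t f) ≤ C' * (∫ x, |f x| ∂π)^2 * t ^ (1-q) := by
  have hpq' : p.HolderConjugate q :=
    Real.holderConjugate_iff.2 ⟨hp, by simpa only [one_div] using hpq⟩
  have := hpq'.sub_one_pos
  refine ⟨(2 * (p - 1)) ^ (1 - q) * C ^ q, by positivity, fun f t ht => ?_⟩
  exact nash_decay_of_hasDerivAt hpq' hC (hderiv f) (fun s => hDnn _)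
    (fun s => integral_nonneg fun _ => abs_nonneg _) (hcontr f) (fun s => hNash _) ht

/-- Nash inequality ⟹ algebraic decay: if Var(f) ≤ C D(f)^{1/p} ‖f‖₁^{2/q}, then
Var(P_t f) ≤ C' ‖f‖₁² t^{1-q}. -/
theorem stmt9 {E : Type*} [MeasurableSpace E] (π : Measure E) [IsProbabilityMeasure π]
    (P : ℝ → (E → ℝ) → (E → ℝ)) (Dform : (E → ℝ) → ℝ)
    (Var : (E → ℝ) → ℝ)
    (hVar : ∀ f, Var f = (∫ x, (f x)^2 ∂π) - (∫ x, f x ∂π)^2)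
    (p q C : ℝ) (hp : 1 < p) (hpq : 1/p + 1/q = 1) (hC : 0 < C)
    (hDnn : ∀ f, 0 ≤ Dform f)
    (hP0 : ∀ f, P 0 f = f)
    (hcontr : ∀ f, ∀ t ≥ (0:ℝ), (∫ x, |P t f x| ∂π) ≤ ∫ x, |f x| ∂π)
    (hderiv : ∀ f t, HasDerivAt (fun s => Var (P s f)) (-2 * Dform (P t f)) t)
    (hNash : ∀ f, Var f ≤ C * (Dform f) ^ (1/p) * (∫ x, |f x| ∂π) ^ (2/q)) :
    ∃ C' : ℝ, 0 < C' ∧ ∀ f, ∀ t > (0:ℝ),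
      Var (P t f) ≤ C' * (∫ x, |f x| ∂π)^2 * t ^ (1-q) :=
  stmt9_general π P Dform Var p q C hp hpq hC hDnn hcontr hderiv hNash
end

section
/- (Criterion for uniqueness/non-explosion of birth-death processes.) A birth-death Q-matrix with rates b_i>0 (i≥0), a_i>0 (i≥1) is regular (the minimal process is non-explosive, equivalently the Q-process is unique) if and only if Σ_{n≥0} (1/(μ_n b_n)) Σ_{i=0}^n μ_i = ∞, where μ_0=1 and μ_i = b_0⋯b_{i-1}/(a_1⋯a_i). -/
/-!
Write `D n = μ n * b n` and `M n = ∑_{i ≤ n} μ i`, so the series is `∑ r n` with `r n = M n / D n`.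
Since `μ (n+1) * a (n+1) = D n`, summing `μ i * (Q u) i = μ i * u i` over `i ≤ n` telescopes to the
flux identity `D n * (u (n+1) - u n) = ∑_{i ≤ n} μ i * u i`. Hence a solution of `Q u = u` with
`u 0 ≥ 0` is nondecreasing, and its increments satisfy `u 0 * r n ≤ u (n+1) - u n ≤ u n * r n`, so
`u 0 * (1 + ∑_{k<n} r k) ≤ u n ≤ u 0 * exp (∑_{k<n} r k)`: when `u 0 > 0`, `u` is bounded exactly
when `∑ r n` converges. A solution is determined by `u 0`, so the bounded nonnegative solutions are
all zero iff the solution with `u 0 = 1` is unbounded, i.e. iff the series diverges.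
-/

open Finset

namespace BirthDeath

/-- At `i = 0` the death term vanishes whatever `a 0` is, because `0 - 1 = 0` in `ℕ`. -/
def IsSolution (a b u : ℕ → ℝ) : Prop :=
  ∀ i, b i * (u (i + 1) - u i) + a i * (u (i - 1) - u i) = u i

theorem IsSolution.eq_zero_of_apply_zero {a b u : ℕ → ℝ} (hb : ∀ i, b i ≠ 0)
    (hu : IsSolution a b u) (h0 : u 0 = 0) : u = 0 := by
  have h : ∀ n, u n = 0 ∧ u (n + 1) = 0 := by
    intro n
    induction n with
    | zero =>
      have h := hu 0
      simp only [Nat.zero_sub, sub_self, mul_zero, add_zero, h0, sub_zero] at h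
      exact ⟨h0, (mul_eq_zero.1 h).resolve_left (hb 0)⟩
    | succ n ih =>
      have h := hu (n + 1)
      simp only [Nat.add_sub_cancel, ih.1, ih.2, sub_self, mul_zero, add_zero, sub_zero] at h
      exact ⟨ih.2, (mul_eq_zero.1 h).resolve_left (hb (n + 1))⟩
  exact funext fun n => (h n).1

/-- Starts from `u 0 = 1` and solves `Q u = u` at `i` for `u (i + 1)`. -/
noncomputable def canonicalSolution (a b : ℕ → ℝ) : ℕ → ℝ
  | 0 => 1
  | 1 => (1 + b 0) / b 0
  | n + 2 => ((1 + a (n + 1) + b (n + 1)) * canonicalSolution a b (n + 1)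
      - a (n + 1) * canonicalSolution a b n) / b (n + 1)

theorem isSolution_canonicalSolution {a b : ℕ → ℝ} (hb : ∀ i, b i ≠ 0) :
    IsSolution a b (canonicalSolution a b) := by
  rintro (_ | n)
  · simp only [canonicalSolution, Nat.zero_sub, sub_self, mul_zero, add_zero]
    field_simp [hb 0]
    ring
  · simp only [canonicalSolution, Nat.add_sub_cancel]
    field_simp [hb (n + 1)]
    ring

theorem IsSolution.mul_sub_eq_sum {a b μ u : ℕ → ℝ} (hμ0 : μ 0 = 1)
    (hμa : ∀ n, μ (n + 1) * a (n + 1) = μ n * b n) (hu : IsSolution a b u) (n : ℕ) :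
    μ n * b n * (u (n + 1) - u n) = ∑ i ∈ range (n + 1), μ i * u i := by
  induction n with
  | zero =>
    have h := hu 0
    simp only [Nat.zero_sub, sub_self, mul_zero, add_zero] at h
    simp [hμ0, h]
  | succ n ih =>
    have h := hu (n + 1)
    simp only [Nat.add_sub_cancel] at h
    rw [sum_range_succ, ← ih]
    linear_combination μ (n + 1) * h + (u (n + 1) - u n) * hμa n

noncomputable def regularityTerm (μ b : ℕ → ℝ) (n : ℕ) : ℝ :=
  1 / (μ n * b n) * ∑ i ∈ range (n + 1), μ i

section SpeedMeasure

variable {a b μ : ℕ → ℝ}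

theorem pos_of_eq_prod_div
    (hμ : ∀ i, μ i = (∏ j ∈ range i, b j) / (∏ j ∈ range i, a (j + 1)))
    (ha : ∀ j, 0 < a (j + 1)) (hb : ∀ i, 0 < b i) (n : ℕ) : 0 < μ n := by
  rw [hμ]
  exact div_pos (prod_pos fun j _ => hb j) (prod_pos fun j _ => ha j)

theorem succ_mul_eq_of_eq_prod_div
    (hμ : ∀ i, μ i = (∏ j ∈ range i, b j) / (∏ j ∈ range i, a (j + 1)))
    (ha : ∀ j, a (j + 1) ≠ 0) (n : ℕ) :
    μ (n + 1) * a (n + 1) = μ n * b n := by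
  have := prod_ne_zero_iff.2 fun j (_ : j ∈ range n) => ha j
  rw [hμ, hμ, prod_range_succ, prod_range_succ]
  field_simp [ha n]

end SpeedMeasure

section Growth

variable {μ b u : ℕ → ℝ}

theorem regularityTerm_nonneg (hμ : ∀ n, 0 < μ n) (hb : ∀ n, 0 < b n) (n : ℕ) :
    0 ≤ regularityTerm μ b n :=
  mul_nonneg (one_div_pos.2 (mul_pos (hμ n) (hb n))).le (sum_nonneg fun i _ => (hμ i).le)

theorem monotone_of_mul_sub_eq_sum (hμ : ∀ n, 0 < μ n) (hb : ∀ n, 0 < b n)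
    (hflux : ∀ n, μ n * b n * (u (n + 1) - u n) = ∑ i ∈ range (n + 1), μ i * u i)
    (h0 : 0 ≤ u 0) : Monotone u := by
  have step : ∀ n, (∀ i ≤ n, 0 ≤ u i) → u n ≤ u (n + 1) := fun n hnonneg => by
    have hsum : 0 ≤ ∑ i ∈ range (n + 1), μ i * u i :=
      sum_nonneg fun i hi => mul_nonneg (hμ i).le (hnonneg i (Nat.lt_succ_iff.1 (mem_range.1 hi)))
    rw [← hflux] at hsum
    exact sub_nonneg.1 (nonneg_of_mul_nonneg_right hsum (mul_pos (hμ n) (hb n)))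
  have nonneg : ∀ n, ∀ i ≤ n, 0 ≤ u i := by
    intro n
    induction n with
    | zero => intro i hi; rwa [Nat.le_zero.1 hi]
    | succ n ih =>
      intro i hi
      rcases hi.eq_or_lt with rfl | hi
      · exact (ih n le_rfl).trans (step n ih)
      · exact ih i (Nat.lt_succ_iff.1 hi)
  exact monotone_nat_of_le_succ fun n => step n (nonneg n)

theorem sub_eq_one_div_mul_sum (hμ : ∀ n, 0 < μ n) (hb : ∀ n, 0 < b n)
    (hflux : ∀ n, μ n * b n * (u (n + 1) - u n) = ∑ i ∈ range (n + 1), μ i * u i) (n : ℕ) :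
    u (n + 1) - u n = 1 / (μ n * b n) * ∑ i ∈ range (n + 1), μ i * u i := by
  rw [← hflux, one_div, inv_mul_cancel_left₀ (mul_pos (hμ n) (hb n)).ne']

theorem apply_zero_mul_regularityTerm_le_sub (hμ : ∀ n, 0 < μ n) (hb : ∀ n, 0 < b n)
    (hflux : ∀ n, μ n * b n * (u (n + 1) - u n) = ∑ i ∈ range (n + 1), μ i * u i)
    (hu : Monotone u) (n : ℕ) : u 0 * regularityTerm μ b n ≤ u (n + 1) - u n := by
  rw [sub_eq_one_div_mul_sum hμ hb hflux, regularityTerm, mul_left_comm, mul_sum]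
  refine mul_le_mul_of_nonneg_left (sum_le_sum fun i _ => ?_)
    (one_div_pos.2 (mul_pos (hμ n) (hb n))).le
  rw [mul_comm]
  exact mul_le_mul_of_nonneg_left (hu (Nat.zero_le i)) (hμ i).le

theorem sub_le_mul_regularityTerm (hμ : ∀ n, 0 < μ n) (hb : ∀ n, 0 < b n)
    (hflux : ∀ n, μ n * b n * (u (n + 1) - u n) = ∑ i ∈ range (n + 1), μ i * u i)
    (hu : Monotone u) (n : ℕ) : u (n + 1) - u n ≤ u n * regularityTerm μ b n := by
  rw [sub_eq_one_div_mul_sum hμ hb hflux, regularityTerm, mul_left_comm, mul_sum _ _ (u n)]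
  refine mul_le_mul_of_nonneg_left (sum_le_sum fun i hi => ?_)
    (one_div_pos.2 (mul_pos (hμ n) (hb n))).le
  rw [mul_comm (u n)]
  exact mul_le_mul_of_nonneg_left (hu (Nat.lt_succ_iff.1 (mem_range.1 hi))) (hμ i).le

theorem apply_zero_mul_one_add_sum_le (hμ : ∀ n, 0 < μ n) (hb : ∀ n, 0 < b n)
    (hflux : ∀ n, μ n * b n * (u (n + 1) - u n) = ∑ i ∈ range (n + 1), μ i * u i)
    (hu : Monotone u) (n : ℕ) :
    u 0 * (1 + ∑ k ∈ range n, regularityTerm μ b k) ≤ u n := by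
  induction n with
  | zero => simp
  | succ n ih =>
    have := apply_zero_mul_regularityTerm_le_sub hμ hb hflux hu n
    rw [sum_range_succ]
    linarith

theorem le_apply_zero_mul_exp_sum (hμ : ∀ n, 0 < μ n) (hb : ∀ n, 0 < b n)
    (hflux : ∀ n, μ n * b n * (u (n + 1) - u n) = ∑ i ∈ range (n + 1), μ i * u i)
    (hu : Monotone u) (h0 : 0 ≤ u 0) (n : ℕ) :
    u n ≤ u 0 * Real.exp (∑ k ∈ range n, regularityTerm μ b k) := by
  induction n with
  | zero => simp
  | succ n ih =>
    have hun : 0 ≤ u n := h0.trans (hu (Nat.zero_le n))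
    calc u (n + 1) ≤ u n * (regularityTerm μ b n + 1) := by
          linarith [sub_le_mul_regularityTerm hμ hb hflux hu n]
      _ ≤ u n * Real.exp (regularityTerm μ b n) :=
          mul_le_mul_of_nonneg_left (Real.add_one_le_exp _) hun
      _ ≤ u 0 * Real.exp (∑ k ∈ range n, regularityTerm μ b k) * Real.exp (regularityTerm μ b n) :=
          mul_le_mul_of_nonneg_right ih (Real.exp_pos _).le
      _ = u 0 * Real.exp (∑ k ∈ range (n + 1), regularityTerm μ b k) := by
          rw [sum_range_succ, Real.exp_add, mul_assoc]

theorem bddAbove_range_iff_summable_regularityTerm (hμ : ∀ n, 0 < μ n) (hb : ∀ n, 0 < b n)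
    (hflux : ∀ n, μ n * b n * (u (n + 1) - u n) = ∑ i ∈ range (n + 1), μ i * u i)
    (h0 : 0 < u 0) : BddAbove (Set.range u) ↔ Summable (regularityTerm μ b) := by
  have hu := monotone_of_mul_sub_eq_sum hμ hb hflux h0.le
  constructor
  · rintro ⟨B, hB⟩
    refine summable_of_sum_range_le (c := B / u 0) (regularityTerm_nonneg hμ hb) fun n => ?_
    rw [le_div_iff₀ h0]
    have := apply_zero_mul_one_add_sum_le hμ hb hflux hu n
    linarith [hB (Set.mem_range_self n)]
  · intro hsum
    refine ⟨u 0 * Real.exp (∑' k, regularityTerm μ b k), Set.forall_mem_range.2 fun n => ?_⟩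
    refine (le_apply_zero_mul_exp_sum hμ hb hflux hu h0.le n).trans ?_
    gcongr
    exact hsum.sum_le_tsum _ fun k _ => regularityTerm_nonneg hμ hb k

end Growth

end BirthDeath

open BirthDeath

theorem stmt10_general (a b : ℕ → ℝ) (ha : ∀ i ≥ 1, 0 < a i) (hb : ∀ i, 0 < b i)
    (μ : ℕ → ℝ)
    (hμ : ∀ i, μ i = (∏ j ∈ Finset.range i, b j) / (∏ j ∈ Finset.range i, a (j+1))) :
    (∀ u : ℕ → ℝ, (∀ i, 0 ≤ u i) → (∃ Mu : ℝ, ∀ i, u i ≤ Mu) →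
      (∀ i : ℕ, b i * (u (i+1) - u i) + a i * (u (i-1) - u i) = u i) →
      ∀ i, u i = 0) ↔
    ¬ Summable (fun n => (1/(μ n * b n)) * ∑ i ∈ Finset.range (n+1), μ i) := by
  have ha' : ∀ j, 0 < a (j + 1) := fun j => ha (j + 1) (Nat.le_add_left 1 j)
  have hμpos := pos_of_eq_prod_div hμ ha' hb
  have hflux {u : ℕ → ℝ} (hu : IsSolution a b u) :=
    hu.mul_sub_eq_sum (by simp [hμ]) (succ_mul_eq_of_eq_prod_div hμ fun j => (ha' j).ne')
  have hbne : ∀ i, b i ≠ 0 := fun i => (hb i).ne'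
  constructor
  · intro H hsum
    have hφ := isSolution_canonicalSolution (a := a) hbne
    have hφ0 : canonicalSolution a b 0 = 1 := rfl
    have hmono := monotone_of_mul_sub_eq_sum hμpos hb (hflux hφ) (by rw [hφ0]; exact zero_le_one)
    obtain ⟨B, hB⟩ := (bddAbove_range_iff_summable_regularityTerm hμpos hb (hflux hφ)
      (by rw [hφ0]; exact one_pos)).2 hsum
    have := H _ (fun i => (hφ0 ▸ zero_le_one).trans (hmono (Nat.zero_le i)))
      ⟨B, fun i => hB (Set.mem_range_self i)⟩ hφ 0
    exact one_ne_zero (hφ0 ▸ this)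
  · rintro hdiv u hu0 ⟨M, hM⟩ hu
    rcases (hu0 0).eq_or_lt with h0 | h0
    · exact congrFun (IsSolution.eq_zero_of_apply_zero hbne hu h0.symm)
    · exact absurd ((bddAbove_range_iff_summable_regularityTerm hμpos hb (hflux hu) h0).1
        ⟨M, Set.forall_mem_range.2 hM⟩) hdiv

/-- Regularity (uniqueness / non-explosion) criterion for birth-death Q-matrices:
the only bounded nonnegative solution u of Qu = u is u ≡ 0 if and only if
Σ_n (1/(μ_n b_n)) Σ_{i=0}^n μ_i = ∞. -/
theorem stmt10 (a b : ℕ → ℝ) (ha0 : a 0 = 0) (ha : ∀ i ≥ 1, 0 < a i) (hb : ∀ i, 0 < b i)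
    (μ : ℕ → ℝ)
    (hμ : ∀ i, μ i = (∏ j ∈ Finset.range i, b j) / (∏ j ∈ Finset.range i, a (j+1))) :
    (∀ u : ℕ → ℝ, (∀ i, 0 ≤ u i) → (∃ Mu : ℝ, ∀ i, u i ≤ Mu) →
      (∀ i : ℕ, b i * (u (i+1) - u i) + a i * (u (i-1) - u i) = u i) →
      ∀ i, u i = 0) ↔
    ¬ Summable (fun n => (1/(μ n * b n)) * ∑ i ∈ Finset.range (n+1), μ i) :=
  stmt10_general a b ha hb μ hμ
end

section
/- (Strong ergodicity criterion comparison.) For a birth-death process on ℕ with μ = Σ μ_i < ∞, the condition S := Σ_{n≥0} (1/(μ_n b_n)) μ[n+1,∞) < ∞ implies δ := sup_{n≥1} μ[n,∞) Σ_{j≤n-1} 1/(μ_j b_j) < ∞; that is, the strong-ergodicity sum being finite implies the Poincaré (exponential ergodicity) criterion holds, and moreover δ ≤ S. -/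
/-! The tail `μ[m,∞)` decreases in `m`, so for `j < n` the term `μ[n,∞) / (μ_j b_j)` is at most
`μ[j+1,∞) / (μ_j b_j)`, the `j`-th term of `S`; summing over `j < n` and bounding the partial sum
of the nonnegative series `S` by `S` gives the claim. -/

open Finset

lemma antitone_tsum_nat_add {f : ℕ → ℝ} (hf : Summable f) (hf0 : ∀ i, 0 ≤ f i) :
    Antitone fun m => ∑' j, f (j + m) := by
  refine antitone_nat_of_succ_le fun m => ?_
  have hsplit := ((summable_nat_add_iff m).2 hf).tsum_eq_zero_add
  simp only [zero_add, add_assoc, add_comm 1 m] at hsplit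
  linarith [hf0 m]

lemma mul_sum_range_le_tsum_mul_succ {w T : ℕ → ℝ} (hw : ∀ j, 0 ≤ w j) (hT : Antitone T)
    (hT0 : ∀ m, 0 ≤ T m) (hs : Summable fun j => w j * T (j + 1)) (n : ℕ) :
    T n * ∑ j ∈ range n, w j ≤ ∑' j, w j * T (j + 1) :=
  calc T n * ∑ j ∈ range n, w j
      = ∑ j ∈ range n, w j * T n := by rw [mul_sum]; simp only [mul_comm]
    _ ≤ ∑ j ∈ range n, w j * T (j + 1) :=
        sum_le_sum fun j hj => mul_le_mul_of_nonneg_left (hT (mem_range.mp hj)) (hw j)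
    _ ≤ ∑' j, w j * T (j + 1) :=
        hs.sum_le_tsum _ fun j _ => mul_nonneg (hw j) (hT0 _)

/-- Strong-ergodicity sum controls the Poincaré criterion: if
S = Σ_{n≥0} (1/(μ_n b_n)) μ[n+1,∞) < ∞ then for every n ≥ 1,
μ[n,∞) Σ_{j≤n-1} 1/(μ_j b_j) ≤ S; in particular δ ≤ S < ∞. -/
theorem stmt12 (μ b : ℕ → ℝ) (hμ : ∀ i, 0 < μ i) (hb : ∀ i, 0 < b i)
    (hsum : Summable μ)
    (hS : Summable (fun n => (1/(μ n * b n)) * ∑' j, μ (j+(n+1)))) :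
    ∀ n ≥ 1, (∑' j, μ (j+n)) * (∑ j ∈ Finset.range n, 1/(μ j * b j)) ≤
      ∑' n, (1/(μ n * b n)) * ∑' j, μ (j+(n+1)) := by
  intro n _
  exact mul_sum_range_le_tsum_mul_succ (fun j => one_div_nonneg.mpr (mul_pos (hμ j) (hb j)).le)
    (antitone_tsum_nat_add hsum fun i => (hμ i).le)
    (fun m => tsum_nonneg fun j => (hμ _).le) hS n
end

section
/- (Weighted Hardy-type two-sided bound, discrete case.) Let (μ_i)_{i≥0}, (ν_i)_{i≥0} be positive sequences with Σμ_i < ∞, and let A be the optimal constant in the discrete Hardy inequality Σ_{i≥1} μ_i (Σ_{j=0}^{i-1} g_j)² ≤ A Σ_{j≥0} ν_j g_j² over all sequences g ≥ 0. Then B ≤ A ≤ 4B, where B = sup_{n≥1} (Σ_{j≥n} μ_j)(Σ_{j=0}^{n-1} 1/ν_j). -/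
open scoped ENNReal
open Finset

/-!
The lower bound comes from testing the inequality with `g = 1 / ν` on `{0, …, n}`.

For the upper bound (Muckenhoupt), let `S j = ∑_{i ≤ j} 1 / ν i` and `T n = ∑_{i ≥ n} μ i`.
Cauchy–Schwarz with the weights `√(S j)` gives
`(∑_{j ≤ i} g j)² ≤ (∑_{j ≤ i} ν j (g j)² √(S j)) (∑_{j ≤ i} 1 / (ν j √(S j)))`,
and the last factor is at most `2 √(S i)` by the mean value bound
`(x - y) / √x ≤ 2 (√x - √y)`. After exchanging the order of summation it remains to bound
`∑_{i ≥ j} μ (i + 1) √(S i) ≤ √B ∑_{i ≥ j} μ (i + 1) / √(T (i + 1)) ≤ 2 √B √(T (j + 1))`,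
again by the mean value bound, and `√(T (j + 1)) ≤ √B / √(S j)`; the two factors `2`
give the constant `4`.
-/

namespace ENNReal

lemma rpow_inv_two_sq (x : ℝ≥0∞) : (x ^ (2⁻¹ : ℝ)) ^ 2 = x := by
  simpa using rpow_inv_natCast_pow two_ne_zero x

lemma sq_sub_sq_le_two_mul_mul_sub {a b : ℝ≥0∞} (hba : b ≤ a) :
    a ^ 2 - b ^ 2 ≤ 2 * a * (a - b) := by
  generalize hc : a - b = c
  obtain rfl : a = b + c := by rw [← hc, add_tsub_cancel_of_le hba]
  rw [tsub_le_iff_right]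
  calc (b + c) ^ 2 ≤ (b + c) ^ 2 + c ^ 2 := le_self_add
    _ = 2 * (b + c) * c + b ^ 2 := by ring

/-- For `t = 1 / √x` and `c = 1` this is the mean value bound `(x - y) / √x ≤ 2 (√x - √y)`. -/
lemma sub_mul_le_two_mul_mul_sqrt_sub {x y t c : ℝ≥0∞} (hyx : y ≤ x)
    (ht : t * x ^ (2⁻¹ : ℝ) ≤ c) :
    (x - y) * t ≤ 2 * c * (x ^ (2⁻¹ : ℝ) - y ^ (2⁻¹ : ℝ)) :=
  calc (x - y) * t = ((x ^ (2⁻¹ : ℝ)) ^ 2 - (y ^ (2⁻¹ : ℝ)) ^ 2) * t := by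
        rw [rpow_inv_two_sq, rpow_inv_two_sq]
    _ ≤ 2 * x ^ (2⁻¹ : ℝ) * (x ^ (2⁻¹ : ℝ) - y ^ (2⁻¹ : ℝ)) * t := by
        gcongr
        exact sq_sub_sq_le_two_mul_mul_sub (rpow_le_rpow hyx (by norm_num))
    _ = 2 * (t * x ^ (2⁻¹ : ℝ)) * (x ^ (2⁻¹ : ℝ) - y ^ (2⁻¹ : ℝ)) := by ring
    _ ≤ 2 * c * (x ^ (2⁻¹ : ℝ) - y ^ (2⁻¹ : ℝ)) := by gcongr

lemma sum_range_sub_le {f : ℕ → ℝ≥0∞} (hf : Monotone f) (n : ℕ) :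
    ∑ k ∈ range n, (f (k + 1) - f k) ≤ f n := by
  suffices ∑ k ∈ range n, (f (k + 1) - f k) + f 0 = f n from this ▸ le_self_add
  induction n with
  | zero => simp
  | succ n ih =>
    rw [sum_range_succ, add_right_comm, ih, add_tsub_cancel_of_le (hf n.le_succ)]

lemma tsum_sub_succ_le {u : ℕ → ℝ≥0∞} (hu : Antitone u) : ∑' k, (u k - u (k + 1)) ≤ u 0 := by
  have key (n : ℕ) : ∑ k ∈ range n, (u k - u (k + 1)) + u n ≤ u 0 := by
    induction n with
    | zero => simp
    | succ n ih => rwa [sum_range_succ, add_assoc, tsub_add_cancel_of_le (hu n.le_succ)]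
  exact tsum_le_of_sum_range_le fun n => le_self_add.trans (key n)

lemma sq_sum_le_sum_inv_mul_sum_mul_sq {ι : Type*} (s : Finset ι) (v g : ι → ℝ≥0∞)
    (hv0 : ∀ i ∈ s, v i ≠ 0) (hvt : ∀ i ∈ s, v i ≠ ⊤) :
    (∑ i ∈ s, g i) ^ 2 ≤ (∑ i ∈ s, (v i)⁻¹) * ∑ i ∈ s, v i * g i ^ 2 := by
  have holder := inner_le_weight_mul_Lp_of_nonneg s one_le_two (fun i => (v i)⁻¹)
    (fun i => v i * g i)
  have hlin : ∑ i ∈ s, (v i)⁻¹ * (v i * g i) = ∑ i ∈ s, g i :=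
    sum_congr rfl fun i hi => by
      rw [← mul_assoc, ENNReal.inv_mul_cancel (hv0 i hi) (hvt i hi), one_mul]
  have hsq : ∑ i ∈ s, (v i)⁻¹ * (v i * g i) ^ (2 : ℝ) = ∑ i ∈ s, v i * g i ^ 2 :=
    sum_congr rfl fun i hi => by
      rw [rpow_two, mul_pow, sq (v i), ← mul_assoc, ← mul_assoc,
        ENNReal.inv_mul_cancel (hv0 i hi) (hvt i hi), one_mul]
  rw [hlin, hsq, show (1 : ℝ) - 2⁻¹ = 2⁻¹ by norm_num] at holder
  calc (∑ i ∈ s, g i) ^ 2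
      ≤ ((∑ i ∈ s, (v i)⁻¹) ^ (2⁻¹ : ℝ) * (∑ i ∈ s, v i * g i ^ 2) ^ (2⁻¹ : ℝ)) ^ 2 := by
        gcongr
    _ = (∑ i ∈ s, (v i)⁻¹) * ∑ i ∈ s, v i * g i ^ 2 := by
        rw [mul_pow, rpow_inv_two_sq, rpow_inv_two_sq]

lemma tsum_mul_sum_range_succ (a b : ℕ → ℝ≥0∞) :
    ∑' i, b i * ∑ j ∈ range (i + 1), a j = ∑' j, a j * ∑' k, b (j + k) :=
  calc ∑' i, b i * ∑ j ∈ range (i + 1), a j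
      = ∑' i, ∑' j, if j ≤ i then a j * b i else 0 := by
        refine tsum_congr fun i => ?_
        rw [tsum_eq_sum (s := range (i + 1)) fun j hj => if_neg (by simpa using hj), mul_sum]
        exact sum_congr rfl fun j hj => by
          rw [if_pos (by simpa [Nat.lt_succ_iff] using hj), mul_comm]
    _ = ∑' j, ∑' i, if j ≤ i then a j * b i else 0 := ENNReal.tsum_comm
    _ = ∑' j, a j * ∑' k, b (j + k) := by
        refine tsum_congr fun j => ?_
        rw [← (ENNReal.summable).sum_add_tsum_nat_add' (k := j), sum_eq_zero fun i hi =>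
          if_neg (by simpa using hi), zero_add, ← ENNReal.tsum_mul_left]
        exact tsum_congr fun k => by rw [if_pos (Nat.le_add_left j k), add_comm k j]

end ENNReal

namespace DiscreteHardy

noncomputable section

variable (M w : ℕ → ℝ≥0∞)

def tailSum (n : ℕ) : ℝ≥0∞ := ∑' j, M (j + n)

def invPartialSum (n : ℕ) : ℝ≥0∞ := ∑ j ∈ range n, (w j)⁻¹

def sqrtInvSum (j : ℕ) : ℝ≥0∞ := invPartialSum w (j + 1) ^ (2⁻¹ : ℝ)

def IsHardyConstant (C : ℝ≥0∞) : Prop :=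
  ∀ g : ℕ → ℝ≥0∞,
    ∑' i, M (i + 1) * (∑ j ∈ range (i + 1), g j) ^ 2 ≤ C * ∑' j, w j * g j ^ 2

def muckenhouptConst : ℝ≥0∞ := ⨆ n : ℕ, tailSum M (n + 1) * invPartialSum w (n + 1)

end

variable {M w : ℕ → ℝ≥0∞}

lemma tailSum_eq_add (n : ℕ) : tailSum M n = M n + tailSum M (n + 1) := by
  rw [tailSum, tsum_eq_zero_add' ENNReal.summable, zero_add, tailSum]
  simp only [add_right_comm _ 1 n, add_assoc]

lemma tailSum_antitone : Antitone (tailSum M) :=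
  antitone_nat_of_succ_le fun n => (tailSum_eq_add n).symm ▸ le_add_self

lemma invPartialSum_succ (n : ℕ) : invPartialSum w (n + 1) = invPartialSum w n + (w n)⁻¹ :=
  sum_range_succ _ n

lemma invPartialSum_mono : Monotone (invPartialSum w) := fun _ _ h =>
  sum_le_sum_of_subset (range_subset_range.2 h)

lemma invPartialSum_ne_top (hw0 : ∀ j, w j ≠ 0) (n : ℕ) : invPartialSum w n ≠ ⊤ :=
  ENNReal.sum_ne_top.2 fun j _ => ENNReal.inv_ne_top.2 (hw0 j)

lemma invPartialSum_succ_ne_zero (hwt : ∀ j, w j ≠ ⊤) (n : ℕ) : invPartialSum w (n + 1) ≠ 0 :=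
  ((ENNReal.inv_pos.2 (hwt 0)).trans_le
    (single_le_sum (f := fun j => (w j)⁻¹) (fun _ _ => zero_le) (by simp))).ne'

lemma sqrtInvSum_ne_zero (hwt : ∀ j, w j ≠ ⊤) (j : ℕ) : sqrtInvSum w j ≠ 0 :=
  (ENNReal.rpow_pos_of_nonneg (invPartialSum_succ_ne_zero hwt j).bot_lt (by norm_num)).ne'

lemma sqrtInvSum_ne_top (hw0 : ∀ j, w j ≠ 0) (j : ℕ) : sqrtInvSum w j ≠ ⊤ :=
  ENNReal.rpow_ne_top_of_nonneg (by norm_num) (invPartialSum_ne_top hw0 (j + 1))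

lemma mul_le_muckenhouptConst (n : ℕ) :
    tailSum M (n + 1) * invPartialSum w (n + 1) ≤ muckenhouptConst M w :=
  le_iSup (fun n => tailSum M (n + 1) * invPartialSum w (n + 1)) n

theorem muckenhouptConst_le_of_isHardyConstant (hw0 : ∀ j, w j ≠ 0) (hwt : ∀ j, w j ≠ ⊤) {C : ℝ≥0∞}
    (hC : IsHardyConstant M w C) : muckenhouptConst M w ≤ C := by
  refine iSup_le fun n => ?_
  set S := invPartialSum w (n + 1)
  let g : ℕ → ℝ≥0∞ := fun j => if j ∈ range (n + 1) then (w j)⁻¹ else 0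
  have hg_sum (k : ℕ) : ∑ j ∈ range (k + (n + 1)), g j = S := by
    rw [sum_ite_mem, inter_eq_right.2 (range_subset_range.2 (Nat.le_add_left _ k))]
    rfl
  have hg_norm : ∑' j, w j * g j ^ 2 = S := by
    rw [tsum_eq_sum (s := range (n + 1)) fun j hj => by simp [show g j = 0 from if_neg hj]]
    refine sum_congr rfl fun j hj => ?_
    rw [show g j = (w j)⁻¹ from if_pos hj, sq, ← mul_assoc,
      ENNReal.mul_inv_cancel (hw0 j) (hwt j), one_mul]
  have hT : tailSum M (n + 1) * S ^ 2 ≤ ∑' i, M (i + 1) * (∑ j ∈ range (i + 1), g j) ^ 2 :=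
    calc tailSum M (n + 1) * S ^ 2
        = ∑' k, M (k + n + 1) * (∑ j ∈ range (k + n + 1), g j) ^ 2 := by
          rw [tailSum, ← ENNReal.tsum_mul_right]
          exact tsum_congr fun k => by rw [add_assoc, hg_sum]
      _ ≤ ∑' i, M (i + 1) * (∑ j ∈ range (i + 1), g j) ^ 2 :=
          ENNReal.tsum_comp_le_tsum_of_injective (add_left_injective n)
            fun i => M (i + 1) * (∑ j ∈ range (i + 1), g j) ^ 2
  have := hT.trans (hC g)
  rw [hg_norm, sq, ← mul_assoc] at this
  exact (ENNReal.mul_le_mul_iff_left (invPartialSum_succ_ne_zero hwt n)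
    (invPartialSum_ne_top hw0 (n + 1))).1 this

lemma sum_range_inv_mul_inv_sqrtInvSum_le (hw0 : ∀ j, w j ≠ 0) (n : ℕ) :
    ∑ j ∈ range n, (w j)⁻¹ * (sqrtInvSum w j)⁻¹ ≤ 2 * invPartialSum w n ^ (2⁻¹ : ℝ) :=
  calc ∑ j ∈ range n, (w j)⁻¹ * (sqrtInvSum w j)⁻¹
      ≤ ∑ j ∈ range n, 2 * 1 * (invPartialSum w (j + 1) ^ (2⁻¹ : ℝ) -
          invPartialSum w j ^ (2⁻¹ : ℝ)) := by
        refine sum_le_sum fun j _ => ?_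
        have hw : (w j)⁻¹ = invPartialSum w (j + 1) - invPartialSum w j := by
          rw [invPartialSum_succ, ENNReal.add_sub_cancel_left (invPartialSum_ne_top hw0 j)]
        rw [hw]
        exact ENNReal.sub_mul_le_two_mul_mul_sqrt_sub (invPartialSum_mono j.le_succ)
          (ENNReal.inv_mul_le_one _)
    _ ≤ 2 * invPartialSum w n ^ (2⁻¹ : ℝ) := by
        rw [mul_one, ← mul_sum]
        gcongr
        exact ENNReal.sum_range_sub_le
          (fun _ _ h => ENNReal.rpow_le_rpow (invPartialSum_mono h) (by norm_num)) n

lemma sq_sum_range_succ_le (hw0 : ∀ j, w j ≠ 0) (hwt : ∀ j, w j ≠ ⊤) (g : ℕ → ℝ≥0∞) (i : ℕ) :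
    (∑ j ∈ range (i + 1), g j) ^ 2
      ≤ 2 * sqrtInvSum w i * ∑ j ∈ range (i + 1), w j * g j ^ 2 * sqrtInvSum w j := by
  have hv0 (j : ℕ) : w j * sqrtInvSum w j ≠ 0 := mul_ne_zero (hw0 j) (sqrtInvSum_ne_zero hwt j)
  have hvt (j : ℕ) : w j * sqrtInvSum w j ≠ ⊤ :=
    ENNReal.mul_ne_top (hwt j) (sqrtInvSum_ne_top hw0 j)
  calc (∑ j ∈ range (i + 1), g j) ^ 2
      ≤ (∑ j ∈ range (i + 1), (w j * sqrtInvSum w j)⁻¹) *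
          ∑ j ∈ range (i + 1), w j * sqrtInvSum w j * g j ^ 2 :=
        ENNReal.sq_sum_le_sum_inv_mul_sum_mul_sq _ _ _ (fun j _ => hv0 j) fun j _ => hvt j
    _ ≤ 2 * sqrtInvSum w i * ∑ j ∈ range (i + 1), w j * g j ^ 2 * sqrtInvSum w j := by
        simp only [ENNReal.mul_inv (Or.inl (hw0 _)) (Or.inl (hwt _)), mul_right_comm (w _)]
        gcongr
        exact sum_range_inv_mul_inv_sqrtInvSum_le hw0 (i + 1)

lemma tsum_mul_sqrtInvSum_le (hw0 : ∀ j, w j ≠ 0) (hwt : ∀ j, w j ≠ ⊤) (j : ℕ) :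
    ∑' k, M (j + k + 1) * sqrtInvSum w (j + k)
      ≤ 2 * muckenhouptConst M w * (sqrtInvSum w j)⁻¹ := by
  set B := muckenhouptConst M w
  have hrt := sqrtInvSum_ne_top hw0 j
  rcases eq_or_ne B ⊤ with hB | hB
  · rw [hB, ENNReal.mul_top two_ne_zero, ENNReal.top_mul (ENNReal.inv_ne_zero.2 hrt)]
    exact le_top
  have hT (n : ℕ) : tailSum M (n + 1) ≠ ⊤ := by
    intro h
    have := mul_le_muckenhouptConst (M := M) (w := w) n
    rw [h, ENNReal.top_mul (invPartialSum_succ_ne_zero hwt n)] at this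
    exact hB (top_unique this)
  have hsq (n : ℕ) : sqrtInvSum w n * tailSum M (n + 1) ^ (2⁻¹ : ℝ) ≤ B ^ (2⁻¹ : ℝ) := by
    rw [sqrtInvSum, ← ENNReal.mul_rpow_of_nonneg _ _ (by norm_num), mul_comm]
    exact ENNReal.rpow_le_rpow (mul_le_muckenhouptConst n) (by norm_num)
  let u : ℕ → ℝ≥0∞ := fun k => tailSum M (j + k + 1) ^ (2⁻¹ : ℝ)
  have hu : Antitone u := fun _ _ h =>
    ENNReal.rpow_le_rpow (tailSum_antitone (by omega)) (by norm_num)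
  calc ∑' k, M (j + k + 1) * sqrtInvSum w (j + k)
      ≤ ∑' k, 2 * B ^ (2⁻¹ : ℝ) * (u k - u (k + 1)) := ENNReal.tsum_le_tsum fun k => by
        rw [← ENNReal.sub_eq_of_eq_add (hT _) (tailSum_eq_add (j + k + 1))]
        exact ENNReal.sub_mul_le_two_mul_mul_sqrt_sub (tailSum_antitone (Nat.le_succ _))
          (hsq (j + k))
    _ ≤ 2 * B ^ (2⁻¹ : ℝ) * u 0 := by
        rw [ENNReal.tsum_mul_left]
        gcongr
        exact ENNReal.tsum_sub_succ_le hu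
    _ ≤ 2 * B ^ (2⁻¹ : ℝ) * (B ^ (2⁻¹ : ℝ) / sqrtInvSum w j) := by
        gcongr
        rw [ENNReal.le_div_iff_mul_le (Or.inl (sqrtInvSum_ne_zero hwt j)) (Or.inl hrt), mul_comm]
        exact hsq j
    _ = 2 * B * (sqrtInvSum w j)⁻¹ := by
        rw [div_eq_mul_inv, ← mul_assoc, mul_assoc 2, ← sq, ENNReal.rpow_inv_two_sq]

theorem isHardyConstant_four_mul (hw0 : ∀ j, w j ≠ 0) (hwt : ∀ j, w j ≠ ⊤) :
    IsHardyConstant M w (4 * muckenhouptConst M w) := by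
  intro g
  set B := muckenhouptConst M w
  calc ∑' i, M (i + 1) * (∑ j ∈ range (i + 1), g j) ^ 2
      ≤ ∑' i, 2 * (M (i + 1) * sqrtInvSum w i *
          ∑ j ∈ range (i + 1), w j * g j ^ 2 * sqrtInvSum w j) :=
        ENNReal.tsum_le_tsum fun i => by
          grw [sq_sum_range_succ_le hw0 hwt g i]
          exact le_of_eq (by ring)
    _ = 2 * ∑' j, w j * g j ^ 2 * sqrtInvSum w j *
          ∑' k, M (j + k + 1) * sqrtInvSum w (j + k) := by
        rw [ENNReal.tsum_mul_left, ENNReal.tsum_mul_sum_range_succ]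
    _ ≤ 2 * ∑' j, w j * g j ^ 2 * sqrtInvSum w j * (2 * B * (sqrtInvSum w j)⁻¹) := by
        gcongr with j
        exact tsum_mul_sqrtInvSum_le hw0 hwt j
    _ = 4 * B * ∑' j, w j * g j ^ 2 := by
        rw [← ENNReal.tsum_mul_left, ← ENNReal.tsum_mul_left]
        refine tsum_congr fun j => ?_
        calc 2 * (w j * g j ^ 2 * sqrtInvSum w j * (2 * B * (sqrtInvSum w j)⁻¹))
            = 2 * 2 * B * (w j * g j ^ 2) * (sqrtInvSum w j * (sqrtInvSum w j)⁻¹) := by ring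
          _ = 4 * B * (w j * g j ^ 2) := by
            rw [ENNReal.mul_inv_cancel (sqrtInvSum_ne_zero hwt j) (sqrtInvSum_ne_top hw0 j),
              mul_one, show (2 : ℝ≥0∞) * 2 = 4 by norm_num]

end DiscreteHardy

theorem stmt14_general (μ ν : ℕ → ℝ) (hν : ∀ i, 0 < ν i)
    (A B : ℝ≥0∞)
    (hA : A = sInf {C : ℝ≥0∞ | ∀ g : ℕ → ℝ≥0∞,
      (∑' i : ℕ, ENNReal.ofReal (μ (i+1)) * (∑ j ∈ Finset.range (i+1), g j)^2)
        ≤ C * ∑' j : ℕ, ENNReal.ofReal (ν j) * (g j)^2})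
    (hB : B = ⨆ n : ℕ,
      (∑' j : ℕ, ENNReal.ofReal (μ (j+(n+1)))) *
        (∑ j ∈ Finset.range (n+1), (ENNReal.ofReal (ν j))⁻¹)) :
    B ≤ A ∧ A ≤ 4 * B := by
  set M : ℕ → ℝ≥0∞ := fun i => ENNReal.ofReal (μ i)
  set w : ℕ → ℝ≥0∞ := fun j => ENNReal.ofReal (ν j)
  have hw0 (j : ℕ) : w j ≠ 0 := (ENNReal.ofReal_pos.2 (hν j)).ne'
  have hwt (j : ℕ) : w j ≠ ⊤ := ENNReal.ofReal_ne_top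
  have hA' : A = sInf {C | DiscreteHardy.IsHardyConstant M w C} := hA
  have hB' : B = DiscreteHardy.muckenhouptConst M w := hB
  subst hA' hB'
  exact ⟨le_sInf fun C hC => DiscreteHardy.muckenhouptConst_le_of_isHardyConstant hw0 hwt hC,
    sInf_le (DiscreteHardy.isHardyConstant_four_mul hw0 hwt)⟩

/-- Muckenhoupt's discrete weighted Hardy inequality: the optimal constant A in
Σ_{i≥1} μ_i (Σ_{j<i} g_j)² ≤ A Σ_j ν_j g_j² (over nonnegative g) satisfies
B ≤ A ≤ 4B, where B = sup_{n≥1} (Σ_{j≥n} μ_j)(Σ_{j<n} 1/ν_j). -/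
theorem stmt14 (μ ν : ℕ → ℝ) (hμ : ∀ i, 0 < μ i) (hν : ∀ i, 0 < ν i)
    (hsum : Summable μ)
    (A B : ℝ≥0∞)
    (hA : A = sInf {C : ℝ≥0∞ | ∀ g : ℕ → ℝ≥0∞,
      (∑' i : ℕ, ENNReal.ofReal (μ (i+1)) * (∑ j ∈ Finset.range (i+1), g j)^2)
        ≤ C * ∑' j : ℕ, ENNReal.ofReal (ν j) * (g j)^2})
    (hB : B = ⨆ n : ℕ,
      (∑' j : ℕ, ENNReal.ofReal (μ (j+(n+1)))) *
        (∑ j ∈ Finset.range (n+1), (ENNReal.ofReal (ν j))⁻¹)) :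
    B ≤ A ∧ A ≤ 4 * B :=
  stmt14_general μ ν hν A B hA hB
end

section
/- (Upper bound half of Corollary 2.4.) With C a positive continuous function on [0,D], δ = sup_{r∈(0,D)} (∫_0^r C(s)^{-1} ds)(∫_r^D C(s) ds), and ξ_1 = sup_{f: f∈C[0,D], f>0 on (0,D)} inf_{r∈(0,D)} 4f(r)/(∫_0^r C(s)^{-1}ds · ∫_s^D C(u)f(u)du), we have ξ_1 ≤ 4δ^{-1}. -/
open MeasureTheory

/-- A continuous function on `[0,D]` which is positive on `(0,D)` is nonnegative on `[0,D]`. -/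
private lemma aux_nonneg {D : ℝ} (hD : 0 < D) {g : ℝ → ℝ}
    (hg : ContinuousOn g (Set.Icc 0 D))
    (hgpos : ∀ r ∈ Set.Ioo (0:ℝ) D, 0 < g r) :
    ∀ x ∈ Set.Icc (0:ℝ) D, 0 ≤ g x := by
  intro x hx
  rcases hx.1.eq_or_lt with h0 | h0
  · -- x = 0
    have hcw : Filter.Tendsto g (nhdsWithin 0 (Set.Ioo 0 D)) (nhds (g 0)) :=
      (hg 0 (Set.left_mem_Icc.2 hD.le)).mono Set.Ioo_subset_Icc_self
    have hne : (nhdsWithin (0:ℝ) (Set.Ioo 0 D)).NeBot := by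
      rw [nhdsWithin_Ioo_eq_nhdsGT hD]; infer_instance
    have h := ge_of_tendsto hcw (Filter.eventually_of_mem self_mem_nhdsWithin
      fun z hz => (hgpos z hz).le)
    exact h0 ▸ h
  rcases hx.2.eq_or_lt with hDx | hDx
  · -- x = D
    have hcw : Filter.Tendsto g (nhdsWithin D (Set.Ioo 0 D)) (nhds (g D)) :=
      (hg D (Set.right_mem_Icc.2 hD.le)).mono Set.Ioo_subset_Icc_self
    have hne : (nhdsWithin D (Set.Ioo 0 D)).NeBot := by
      rw [nhdsWithin_Ioo_eq_nhdsLT hD]; infer_instance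
    have h := ge_of_tendsto hcw (Filter.eventually_of_mem self_mem_nhdsWithin
      fun z hz => (hgpos z hz).le)
    exact hDx ▸ h
  · exact (hgpos x ⟨h0, hDx⟩).le

/-- Core estimate: if `y` is positive and is below all the ratios
`4 g r / ∫₀ʳ C⁻¹ ∫ₛᴰ C g`, then `(∫₀^{r₀} C⁻¹)(∫_{r₀}^D C) ≤ 4 / y`. -/
private lemma aux_main {D : ℝ} (hD : 0 < D) {C : ℝ → ℝ}
    (hC : ContinuousOn C (Set.Icc 0 D)) (hCpos : ∀ r ∈ Set.Icc (0:ℝ) D, 0 < C r)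
    {g : ℝ → ℝ} (hg : ContinuousOn g (Set.Icc 0 D))
    (hgpos : ∀ r ∈ Set.Ioo (0:ℝ) D, 0 < g r)
    {y : ℝ} (hy : 0 < y)
    (hyle : ∀ r ∈ Set.Ioo (0:ℝ) D,
      y ≤ 4 * g r / ∫ s in (0:ℝ)..r, (C s)⁻¹ * ∫ u in s..D, C u * g u)
    {r₀ : ℝ} (hr₀ : r₀ ∈ Set.Ioo (0:ℝ) D) :
    (∫ s in (0:ℝ)..r₀, (C s)⁻¹) * (∫ s in r₀..D, C s) ≤ 4 / y := by
  have hsub : ∀ {a b : ℝ}, a ∈ Set.Icc (0:ℝ) D → b ∈ Set.Icc (0:ℝ) D →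
      Set.uIcc a b ⊆ Set.Icc 0 D := by
    intro a b ha hb
    rw [← Set.uIcc_of_le hD.le]
    exact Set.uIcc_subset_uIcc (by rwa [Set.uIcc_of_le hD.le])
      (by rwa [Set.uIcc_of_le hD.le])
  have hgnn := aux_nonneg hD hg hgpos
  have hCinv : ContinuousOn (fun s => (C s)⁻¹) (Set.Icc 0 D) :=
    hC.inv₀ fun x hx => (hCpos x hx).ne'
  have hCg : ContinuousOn (fun u => C u * g u) (Set.Icc 0 D) := hC.mul hg
  have hCgnn : ∀ u ∈ Set.Icc (0:ℝ) D, 0 ≤ C u * g u := fun u hu =>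
    mul_nonneg (hCpos u hu).le (hgnn u hu)
  have hJint : ∀ {a b : ℝ}, a ∈ Set.Icc (0:ℝ) D → b ∈ Set.Icc (0:ℝ) D →
      IntervalIntegrable (fun u => C u * g u) volume a b := fun ha hb =>
    (hCg.mono (hsub ha hb)).intervalIntegrable
  have hJnn : ∀ s ∈ Set.Icc (0:ℝ) D, 0 ≤ ∫ u in s..D, C u * g u := fun s hs =>
    intervalIntegral.integral_nonneg hs.2 fun u hu => hCgnn u ⟨hs.1.trans hu.1, hu.2⟩
  have hDIcc : D ∈ Set.Icc (0:ℝ) D := Set.right_mem_Icc.2 hD.le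
  have h0Icc : (0:ℝ) ∈ Set.Icc (0:ℝ) D := Set.left_mem_Icc.2 hD.le
  have hr₀Icc : r₀ ∈ Set.Icc (0:ℝ) D := ⟨hr₀.1.le, hr₀.2.le⟩
  -- continuity of s ↦ ∫ₛᴰ C g
  have hprim : ContinuousOn (fun s => ∫ u in (0:ℝ)..s, C u * g u) (Set.Icc 0 D) := by
    have h := intervalIntegral.continuousOn_primitive_interval
      (μ := volume) (f := fun u => C u * g u) (a := 0) (b := D) ?_
    · rwa [Set.uIcc_of_le hD.le] at h
    · rw [Set.uIcc_of_le hD.le]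
      exact hCg.integrableOn_Icc
  have hJeq : ∀ s ∈ Set.Icc (0:ℝ) D, (∫ u in s..D, C u * g u)
      = (∫ u in (0:ℝ)..D, C u * g u) - ∫ u in (0:ℝ)..s, C u * g u := by
    intro s hs
    have h := intervalIntegral.integral_add_adjacent_intervals
      (hJint h0Icc hs) (hJint hs hDIcc)
    linarith
  have hJcont : ContinuousOn (fun s => ∫ u in s..D, C u * g u) (Set.Icc 0 D) :=
    (continuousOn_const.sub hprim).congr hJeq
  have hHcont : ContinuousOn (fun s => (C s)⁻¹ * ∫ u in s..D, C u * g u)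
      (Set.Icc 0 D) := hCinv.mul hJcont
  have hHint : ∀ {a b : ℝ}, a ∈ Set.Icc (0:ℝ) D → b ∈ Set.Icc (0:ℝ) D →
      IntervalIntegrable (fun s => (C s)⁻¹ * ∫ u in s..D, C u * g u) volume a b :=
    fun ha hb => (hHcont.mono (hsub ha hb)).intervalIntegrable
  have hHnn : ∀ s ∈ Set.Icc (0:ℝ) D, 0 ≤ (C s)⁻¹ * ∫ u in s..D, C u * g u :=
    fun s hs => mul_nonneg (inv_nonneg.2 (hCpos s hs).le) (hJnn s hs)
  have hCinvint : ∀ {a b : ℝ}, a ∈ Set.Icc (0:ℝ) D → b ∈ Set.Icc (0:ℝ) D →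
      IntervalIntegrable (fun s => (C s)⁻¹) volume a b :=
    fun ha hb => (hCinv.mono (hsub ha hb)).intervalIntegrable
  have hφnn : 0 ≤ ∫ s in (0:ℝ)..r₀, (C s)⁻¹ :=
    intervalIntegral.integral_nonneg hr₀.1.le
      (fun s hs => inv_nonneg.2 (hCpos s ⟨hs.1, hs.2.trans hr₀.2.le⟩).le)
  -- Step 1: the estimate with D' < D in place of D
  have key : ∀ D' ∈ Set.Ioo r₀ D,
      (∫ s in (0:ℝ)..r₀, (C s)⁻¹) * (∫ s in r₀..D', C s) ≤ 4 / y := by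
    intro D' hD'
    have hD'Icc : D' ∈ Set.Icc (0:ℝ) D := ⟨(hr₀.1.trans hD'.1).le, hD'.2.le⟩
    -- minimum of g on [r₀, D']
    obtain ⟨u, hu, hmin⟩ := isCompact_Icc.exists_isMinOn (Set.nonempty_Icc.2 hD'.1.le)
      (hg.mono (Set.Icc_subset_Icc hr₀.1.le hD'Icc.2))
    have huIoo : u ∈ Set.Ioo (0:ℝ) D := ⟨hr₀.1.trans_le hu.1, lt_of_le_of_lt hu.2 hD'.2⟩
    have huIcc : u ∈ Set.Icc (0:ℝ) D := ⟨huIoo.1.le, huIoo.2.le⟩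
    have hgu : 0 < g u := hgpos u huIoo
    -- positivity of the denominator I(u)
    have hIpos : 0 < ∫ s in (0:ℝ)..u, (C s)⁻¹ * ∫ v in s..D, C v * g v := by
      refine intervalIntegral.intervalIntegral_pos_of_pos_on (hHint h0Icc huIcc)
        ?_ huIoo.1
      intro s hs
      have hsIcc : s ∈ Set.Icc (0:ℝ) D := ⟨hs.1.le, (hs.2.trans huIoo.2).le⟩
      refine mul_pos (inv_pos.2 (hCpos s hsIcc)) ?_
      refine intervalIntegral.intervalIntegral_pos_of_pos_on (hJint hsIcc hDIcc)
        ?_ (hs.2.trans huIoo.2)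
      intro v hv
      exact mul_pos (hCpos v ⟨(hs.1.trans hv.1).le, hv.2.le⟩)
        (hgpos v ⟨hs.1.trans hv.1, hv.2⟩)
    -- y ≤ 4 g(u)/I(u) gives y * I(u) ≤ 4 g(u)
    have h1 : y * (∫ s in (0:ℝ)..u, (C s)⁻¹ * ∫ v in s..D, C v * g v) ≤ 4 * g u := by
      have h := hyle u huIoo
      rw [le_div_iff₀ hIpos] at h
      linarith
    -- the g u lower bound for the middle integral
    have hK1 : (∫ s in r₀..D', C s) * g u ≤ ∫ v in r₀..D', C v * g v := by
      have h := intervalIntegral.integral_mono_on (f := fun v => C v * g u)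
        (g := fun v => C v * g v) hD'.1.le
        ((hC.mono (hsub hr₀Icc hD'Icc)).intervalIntegrable.mul_const (g u))
        (hJint hr₀Icc hD'Icc)
        (fun v hv => mul_le_mul_of_nonneg_left (hmin hv)
          (hCpos v ⟨(hr₀.1.trans_le hv.1).le, hv.2.trans hD'.2.le⟩).le)
      rwa [intervalIntegral.integral_mul_const] at h
    -- for s ≤ r₀, ∫ₛᴰ C g ≥ ∫_{r₀}^{D'} C g
    have hK2 : ∀ s ∈ Set.Icc (0:ℝ) r₀,
        (∫ v in r₀..D', C v * g v) ≤ ∫ v in s..D, C v * g v := by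
      intro s hs
      have hsIcc : s ∈ Set.Icc (0:ℝ) D := ⟨hs.1, hs.2.trans hr₀.2.le⟩
      have e1 := intervalIntegral.integral_add_adjacent_intervals
        (hJint hsIcc hr₀Icc) (hJint hr₀Icc hD'Icc)
      have e2 := intervalIntegral.integral_add_adjacent_intervals
        (hJint hsIcc hD'Icc) (hJint hD'Icc hDIcc)
      have n1 : 0 ≤ ∫ v in s..r₀, C v * g v :=
        intervalIntegral.integral_nonneg hs.2
          (fun v hv => hCgnn v ⟨hs.1.trans hv.1, hv.2.trans hr₀.2.le⟩)
      have n2 : 0 ≤ ∫ v in D'..D, C v * g v :=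
        intervalIntegral.integral_nonneg hD'.2.le
          (fun v hv => hCgnn v ⟨hD'Icc.1.trans hv.1, hv.2⟩)
      linarith
    -- lower bound I(r₀) ≥ φ(r₀) * ∫_{r₀}^{D'} C g
    have hIr₀ : (∫ s in (0:ℝ)..r₀, (C s)⁻¹) * (∫ v in r₀..D', C v * g v)
        ≤ ∫ s in (0:ℝ)..r₀, (C s)⁻¹ * ∫ v in s..D, C v * g v := by
      have h := intervalIntegral.integral_mono_on
        (f := fun s => (C s)⁻¹ * ∫ v in r₀..D', C v * g v)
        (g := fun s => (C s)⁻¹ * ∫ v in s..D, C v * g v) hr₀.1.le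
        ((hCinv.mono (hsub h0Icc hr₀Icc)).intervalIntegrable.mul_const _)
        (hHint h0Icc hr₀Icc)
        (fun s hs => mul_le_mul_of_nonneg_left (hK2 s hs)
          (inv_nonneg.2 (hCpos s ⟨hs.1, hs.2.trans hr₀.2.le⟩).le))
      rwa [intervalIntegral.integral_mul_const] at h
    -- monotonicity: I(r₀) ≤ I(u)
    have hImono : (∫ s in (0:ℝ)..r₀, (C s)⁻¹ * ∫ v in s..D, C v * g v)
        ≤ ∫ s in (0:ℝ)..u, (C s)⁻¹ * ∫ v in s..D, C v * g v := by
      have e := intervalIntegral.integral_add_adjacent_intervals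
        (hHint h0Icc hr₀Icc) (hHint hr₀Icc huIcc)
      have n : 0 ≤ ∫ s in r₀..u, (C s)⁻¹ * ∫ v in s..D, C v * g v :=
        intervalIntegral.integral_nonneg hu.1
          (fun s hs => hHnn s ⟨hr₀.1.le.trans hs.1, hs.2.trans huIcc.2⟩)
      linarith
    -- put everything together
    have hA : (∫ s in (0:ℝ)..r₀, (C s)⁻¹) * ((∫ s in r₀..D', C s) * g u)
        ≤ ∫ s in (0:ℝ)..u, (C s)⁻¹ * ∫ v in s..D, C v * g v := by
      calc (∫ s in (0:ℝ)..r₀, (C s)⁻¹) * ((∫ s in r₀..D', C s) * g u)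
          ≤ (∫ s in (0:ℝ)..r₀, (C s)⁻¹) * (∫ v in r₀..D', C v * g v) :=
            mul_le_mul_of_nonneg_left hK1 hφnn
        _ ≤ _ := hIr₀.trans hImono
    have hB : y * ((∫ s in (0:ℝ)..r₀, (C s)⁻¹) * ((∫ s in r₀..D', C s) * g u))
        ≤ 4 * g u := (mul_le_mul_of_nonneg_left hA hy.le).trans h1
    have hC4 : (y * ((∫ s in (0:ℝ)..r₀, (C s)⁻¹) * (∫ s in r₀..D', C s))) * g u
        ≤ 4 * g u := by nlinarith [hB]
    have h5 : y * ((∫ s in (0:ℝ)..r₀, (C s)⁻¹) * (∫ s in r₀..D', C s)) ≤ 4 :=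
      le_of_mul_le_mul_right hC4 hgu
    rw [le_div_iff₀ hy]
    linarith
  -- Step 2: let D' → D
  have hp : ContinuousOn (fun b => ∫ s in r₀..b, C s) (Set.Icc r₀ D) := by
    have h := intervalIntegral.continuousOn_primitive_interval
      (μ := volume) (f := C) (a := r₀) (b := D) ?_
    · rwa [Set.uIcc_of_le hr₀.2.le] at h
    · rw [Set.uIcc_of_le hr₀.2.le]
      exact (hC.mono (Set.Icc_subset_Icc hr₀.1.le le_rfl)).integrableOn_Icc
  have hcont : Filter.Tendsto (fun b => (∫ s in (0:ℝ)..r₀, (C s)⁻¹) * ∫ s in r₀..b, C s)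
      (nhdsWithin D (Set.Ioo r₀ D))
      (nhds ((∫ s in (0:ℝ)..r₀, (C s)⁻¹) * ∫ s in r₀..D, C s)) := by
    have h : ContinuousWithinAt (fun b => (∫ s in (0:ℝ)..r₀, (C s)⁻¹) * ∫ s in r₀..b, C s)
        (Set.Icc r₀ D) D :=
      (continuousWithinAt_const.mul (hp D (Set.right_mem_Icc.2 hr₀.2.le)))
    exact h.mono_left (nhdsWithin_mono _ Set.Ioo_subset_Icc_self)
  have hne : (nhdsWithin D (Set.Ioo r₀ D)).NeBot := by
    rw [nhdsWithin_Ioo_eq_nhdsLT hr₀.2]; infer_instance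
  exact le_of_tendsto hcont (Filter.eventually_of_mem self_mem_nhdsWithin key)

/-- Upper bound half of Corollary 2.4: ξ₁ ≤ 4 δ⁻¹, where
ξ₁ = sup_f inf_{r∈(0,D)} 4f(r)/(∫₀ʳ C(s)⁻¹ ∫ₛᴰ C(u)f(u) du ds) and
δ = sup_{r∈(0,D)} (∫₀ʳ C⁻¹)(∫ᵣᴰ C). -/
theorem stmt16 (D : ℝ) (hD : 0 < D) (C : ℝ → ℝ)
    (hC : ContinuousOn C (Set.Icc 0 D)) (hCpos : ∀ r ∈ Set.Icc (0:ℝ) D, 0 < C r)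
    (δ : ℝ) (hδ : δ = sSup {x : ℝ | ∃ r ∈ Set.Ioo (0:ℝ) D,
      x = (∫ s in (0:ℝ)..r, (C s)⁻¹) * (∫ s in r..D, C s)})
    (ξ : ℝ) (hξ : ξ = sSup {y : ℝ | ∃ g : ℝ → ℝ, ContinuousOn g (Set.Icc 0 D) ∧
      (∀ r ∈ Set.Ioo (0:ℝ) D, 0 < g r) ∧
      y = sInf {z : ℝ | ∃ r ∈ Set.Ioo (0:ℝ) D,
        z = 4 * g r / ∫ s in (0:ℝ)..r, (C s)⁻¹ * ∫ u in s..D, C u * g u}}) :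
    ξ ≤ 4 * δ⁻¹ := by
  have hsub : ∀ {a b : ℝ}, a ∈ Set.Icc (0:ℝ) D → b ∈ Set.Icc (0:ℝ) D →
      Set.uIcc a b ⊆ Set.Icc 0 D := by
    intro a b ha hb
    rw [← Set.uIcc_of_le hD.le]
    exact Set.uIcc_subset_uIcc (by rwa [Set.uIcc_of_le hD.le])
      (by rwa [Set.uIcc_of_le hD.le])
  have hDIcc : D ∈ Set.Icc (0:ℝ) D := Set.right_mem_Icc.2 hD.le
  have h0Icc : (0:ℝ) ∈ Set.Icc (0:ℝ) D := Set.left_mem_Icc.2 hD.le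
  have hCinv : ContinuousOn (fun s => (C s)⁻¹) (Set.Icc 0 D) :=
    hC.inv₀ fun x hx => (hCpos x hx).ne'
  have hCinvint : ∀ {a b : ℝ}, a ∈ Set.Icc (0:ℝ) D → b ∈ Set.Icc (0:ℝ) D →
      IntervalIntegrable (fun s => (C s)⁻¹) volume a b :=
    fun ha hb => (hCinv.mono (hsub ha hb)).intervalIntegrable
  have hCint : ∀ {a b : ℝ}, a ∈ Set.Icc (0:ℝ) D → b ∈ Set.Icc (0:ℝ) D →
      IntervalIntegrable C volume a b :=
    fun ha hb => (hC.mono (hsub ha hb)).intervalIntegrable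
  -- the δ-set is bounded above
  have hbdd : BddAbove {x : ℝ | ∃ r ∈ Set.Ioo (0:ℝ) D,
      x = (∫ s in (0:ℝ)..r, (C s)⁻¹) * (∫ s in r..D, C s)} := by
    refine ⟨(∫ s in (0:ℝ)..D, (C s)⁻¹) * (∫ s in (0:ℝ)..D, C s), ?_⟩
    rintro x ⟨r, hr, rfl⟩
    have hrIcc : r ∈ Set.Icc (0:ℝ) D := ⟨hr.1.le, hr.2.le⟩
    have e1 := intervalIntegral.integral_add_adjacent_intervals
      (hCinvint h0Icc hrIcc) (hCinvint hrIcc hDIcc)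
    have n1 : 0 ≤ ∫ s in r..D, (C s)⁻¹ :=
      intervalIntegral.integral_nonneg hr.2.le
        (fun s hs => inv_nonneg.2 (hCpos s ⟨hr.1.le.trans hs.1, hs.2⟩).le)
    have h1 : (∫ s in (0:ℝ)..r, (C s)⁻¹) ≤ ∫ s in (0:ℝ)..D, (C s)⁻¹ := by linarith
    have e2 := intervalIntegral.integral_add_adjacent_intervals
      (hCint h0Icc hrIcc) (hCint hrIcc hDIcc)
    have n2 : 0 ≤ ∫ s in (0:ℝ)..r, C s :=
      intervalIntegral.integral_nonneg hr.1.le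
        (fun s hs => (hCpos s ⟨hs.1, hs.2.trans hr.2.le⟩).le)
    have h2 : (∫ s in r..D, C s) ≤ ∫ s in (0:ℝ)..D, C s := by linarith
    have n3 : 0 ≤ ∫ s in r..D, C s :=
      intervalIntegral.integral_nonneg hr.2.le
        (fun s hs => (hCpos s ⟨hr.1.le.trans hs.1, hs.2⟩).le)
    have n4 : 0 ≤ ∫ s in (0:ℝ)..r, (C s)⁻¹ :=
      intervalIntegral.integral_nonneg hr.1.le
        (fun s hs => inv_nonneg.2 (hCpos s ⟨hs.1, hs.2.trans hr.2.le⟩).le)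
    exact mul_le_mul h1 h2 n3 (by linarith)
  -- δ is positive
  have hδpos : 0 < δ := by
    rw [hδ]
    have hhalf : D / 2 ∈ Set.Ioo (0:ℝ) D := ⟨half_pos hD, half_lt_self hD⟩
    have hmem : (∫ s in (0:ℝ)..(D/2), (C s)⁻¹) * (∫ s in (D/2)..D, C s) ∈
        {x : ℝ | ∃ r ∈ Set.Ioo (0:ℝ) D,
          x = (∫ s in (0:ℝ)..r, (C s)⁻¹) * (∫ s in r..D, C s)} :=
      ⟨D/2, hhalf, rfl⟩
    refine lt_of_lt_of_le ?_ (le_csSup hbdd hmem)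
    have hhIcc : D / 2 ∈ Set.Icc (0:ℝ) D := ⟨hhalf.1.le, hhalf.2.le⟩
    refine mul_pos ?_ ?_
    · exact intervalIntegral.intervalIntegral_pos_of_pos_on (hCinvint h0Icc hhIcc)
        (fun s hs => inv_pos.2 (hCpos s ⟨hs.1.le, (hs.2.trans hhalf.2).le⟩)) hhalf.1
    · exact intervalIntegral.intervalIntegral_pos_of_pos_on (hCint hhIcc hDIcc)
        (fun s hs => hCpos s ⟨(hhalf.1.trans hs.1).le, hs.2.le⟩) hhalf.2
  have h4δ : 0 ≤ 4 * δ⁻¹ := mul_nonneg (by norm_num) (inv_nonneg.2 hδpos.le)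
  rw [hξ]
  refine Real.sSup_le ?_ h4δ
  rintro y ⟨g, hg, hgpos, rfl⟩
  by_cases hy : sInf {z : ℝ | ∃ r ∈ Set.Ioo (0:ℝ) D,
      z = 4 * g r / ∫ s in (0:ℝ)..r, (C s)⁻¹ * ∫ u in s..D, C u * g u} ≤ 0
  · exact hy.trans h4δ
  push_neg at hy
  -- facts about g
  have hgnn := aux_nonneg hD hg hgpos
  have hCg : ContinuousOn (fun u => C u * g u) (Set.Icc 0 D) := hC.mul hg
  have hJint : ∀ {a b : ℝ}, a ∈ Set.Icc (0:ℝ) D → b ∈ Set.Icc (0:ℝ) D →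
      IntervalIntegrable (fun u => C u * g u) volume a b := fun ha hb =>
    (hCg.mono (hsub ha hb)).intervalIntegrable
  have hJnn : ∀ s ∈ Set.Icc (0:ℝ) D, 0 ≤ ∫ u in s..D, C u * g u := fun s hs =>
    intervalIntegral.integral_nonneg hs.2 fun u hu =>
      mul_nonneg (hCpos u ⟨hs.1.trans hu.1, hu.2⟩).le (hgnn u ⟨hs.1.trans hu.1, hu.2⟩)
  -- the Z-set is bounded below by 0
  have hZbdd : BddBelow {z : ℝ | ∃ r ∈ Set.Ioo (0:ℝ) D,
      z = 4 * g r / ∫ s in (0:ℝ)..r, (C s)⁻¹ * ∫ u in s..D, C u * g u} := by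
    refine ⟨0, ?_⟩
    rintro z ⟨r, hr, rfl⟩
    have hrIcc : r ∈ Set.Icc (0:ℝ) D := ⟨hr.1.le, hr.2.le⟩
    have hnum : 0 ≤ 4 * g r := mul_nonneg (by norm_num) (hgpos r hr).le
    have hden : 0 ≤ ∫ s in (0:ℝ)..r, (C s)⁻¹ * ∫ u in s..D, C u * g u :=
      intervalIntegral.integral_nonneg hr.1.le (fun s hs =>
        mul_nonneg (inv_nonneg.2 (hCpos s ⟨hs.1, hs.2.trans hr.2.le⟩).le)
          (hJnn s ⟨hs.1, hs.2.trans hr.2.le⟩))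
    exact div_nonneg hnum hden
  have hyle : ∀ r ∈ Set.Ioo (0:ℝ) D,
      sInf {z : ℝ | ∃ r ∈ Set.Ioo (0:ℝ) D,
        z = 4 * g r / ∫ s in (0:ℝ)..r, (C s)⁻¹ * ∫ u in s..D, C u * g u}
      ≤ 4 * g r / ∫ s in (0:ℝ)..r, (C s)⁻¹ * ∫ u in s..D, C u * g u :=
    fun r hr => csInf_le hZbdd ⟨r, hr, rfl⟩
  set y := sInf {z : ℝ | ∃ r ∈ Set.Ioo (0:ℝ) D,
      z = 4 * g r / ∫ s in (0:ℝ)..r, (C s)⁻¹ * ∫ u in s..D, C u * g u} with hydef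
  have hkey : ∀ r₀ ∈ Set.Ioo (0:ℝ) D,
      (∫ s in (0:ℝ)..r₀, (C s)⁻¹) * (∫ s in r₀..D, C s) ≤ 4 / y :=
    fun r₀ hr₀ => aux_main hD hC hCpos hg hgpos hy hyle hr₀
  have hδle : δ ≤ 4 / y := by
    rw [hδ]
    refine Real.sSup_le ?_ (div_nonneg (by norm_num) hy.le)
    rintro x ⟨r, hr, rfl⟩
    exact hkey r hr
  have h6 : δ * y ≤ 4 := (le_div_iff₀ hy).1 hδle
  rw [show (4:ℝ) * δ⁻¹ = 4 / δ from (div_eq_mul_inv 4 δ).symm, le_div_iff₀ hδpos]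
  nlinarith [h6]
end
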